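/- arXiv:math/9811067 — 5 statements merged into one kernel-verified Lean document; each statement's English description precedes it below -/
import Mathlib

section
/- For every positive integer n, the poset P_n of 132-avoiding permutations of [n], ordered by x ≤ y if and only if D(x) ⊆ D(y), is self-dual: there exists a bijection g from the set of 132-avoiding permutations of [n] onto itself such that for all 132-avoiding permutations x, y of [n], D(x) ⊆ D(y) if and only if D(g(y)) ⊆ D(g(x)). -/
/-- A permutation `p` of `[n]` (modelled on `Fin n`, 0-based) is 132-avoiding if there
are no positions `i < j < k` with `p i < p k < p j`. -/
def Avoids132 {n : ℕ} (p : Equiv.Perm (Fin n)) : Prop :=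
  ¬ ∃ i j k : Fin n, i < j ∧ j < k ∧ p i < p k ∧ p k < p j

/-- The descent set of `p`, in the 1-based convention of the paper: `i ∈ D(p)` iff
`1 ≤ i ≤ n-1` and `p_i > p_{i+1}`, where `p_i` denotes the `i`-th entry of `p` in
1-based indexing (so `p_i = p ⟨i-1⟩` in 0-based indexing). -/
def DescentSet {n : ℕ} (p : Equiv.Perm (Fin n)) : Finset ℕ :=
  (Finset.range n).filter (fun i => ∃ h : 1 ≤ i ∧ i < n, p ⟨i, h.2⟩ < p ⟨i - 1, by omega⟩)

open Equiv Finset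

lemma mem_DescentSet {n : ℕ} {p : Equiv.Perm (Fin n)} {i : ℕ} :
    i ∈ DescentSet p ↔ ∃ h : 1 ≤ i ∧ i < n, (p ⟨i, h.2⟩ : ℕ) < (p ⟨i - 1, by omega⟩ : ℕ) := by
  unfold DescentSet
  simp only [Finset.mem_filter, Finset.mem_range]
  constructor
  · rintro ⟨_, h, hlt⟩; exact ⟨h, hlt⟩
  · rintro ⟨h, hlt⟩; exact ⟨h.2, h, hlt⟩

lemma descentSet_bounds {n : ℕ} {p : Equiv.Perm (Fin n)} {i : ℕ} (h : i ∈ DescentSet p) :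
    1 ≤ i ∧ i ≤ n - 1 := by
  rw [mem_DescentSet] at h
  obtain ⟨⟨h1, h2⟩, -⟩ := h
  omega

/-- σ_n(S) = {n - i : i ∈ [1, n-1] \ S}, reverse of complement. -/
def sigmaSet (n : ℕ) (S : Finset ℕ) : Finset ℕ :=
  ((Finset.Icc 1 (n - 1)).filter (fun i => i ∉ S)).image (fun i => n - i)

lemma mem_sigmaSet {n : ℕ} {S : Finset ℕ} {j : ℕ} :
    j ∈ sigmaSet n S ↔ 1 ≤ j ∧ j ≤ n - 1 ∧ n - j ∉ S := by
  unfold sigmaSet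
  simp only [Finset.mem_image, Finset.mem_filter, Finset.mem_Icc]
  constructor
  · rintro ⟨i, ⟨⟨h1, h2⟩, h3⟩, rfl⟩
    refine ⟨by omega, by omega, ?_⟩
    rwa [show n - (n - i) = i by omega]
  · rintro ⟨h1, h2, h3⟩
    exact ⟨n - j, ⟨⟨by omega, by omega⟩, h3⟩, by omega⟩

lemma sigma_anti_iff {n : ℕ} {S T : Finset ℕ}
    (hS : ∀ i ∈ S, 1 ≤ i ∧ i ≤ n - 1) (hT : ∀ i ∈ T, 1 ≤ i ∧ i ≤ n - 1) :
    S ⊆ T ↔ sigmaSet n T ⊆ sigmaSet n S := by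
  constructor
  · intro hst j hj
    rw [mem_sigmaSet] at hj ⊢
    exact ⟨hj.1, hj.2.1, fun hmem => hj.2.2 (hst hmem)⟩
  · intro h i hi
    by_contra hiT
    obtain ⟨h1, h2⟩ := hS i hi
    have hj : n - i ∈ sigmaSet n T := by
      rw [mem_sigmaSet]
      exact ⟨by omega, by omega, by rwa [show n - (n - i) = i by omega]⟩
    have := h hj
    rw [mem_sigmaSet] at this
    rw [show n - (n - i) = i by omega] at this
    exact this.2.2 hi
open Equiv Finset

def glueFun {a b : ℕ} (A : Equiv.Perm (Fin a)) (B : Equiv.Perm (Fin b)) :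
    Fin (a + b + 1) → Fin (a + b + 1) := fun i =>
  if h : (i : ℕ) < a then ⟨b + A ⟨i, h⟩, by have := (A ⟨i, h⟩).isLt; omega⟩
  else if h2 : (i : ℕ) = a then ⟨a + b, by omega⟩
  else ⟨B ⟨(i : ℕ) - a - 1, by have := i.isLt; omega⟩,
        by have := (B ⟨(i : ℕ) - a - 1, by have := i.isLt; omega⟩).isLt; omega⟩

lemma glueFun_lt {a b : ℕ} (A : Equiv.Perm (Fin a)) (B : Equiv.Perm (Fin b))
    {i : Fin (a + b + 1)} (h : (i : ℕ) < a) :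
    ((glueFun A B i) : ℕ) = b + A ⟨i, h⟩ := by
  unfold glueFun; rw [dif_pos h]

lemma glueFun_eq {a b : ℕ} (A : Equiv.Perm (Fin a)) (B : Equiv.Perm (Fin b))
    {i : Fin (a + b + 1)} (h : (i : ℕ) = a) :
    ((glueFun A B i) : ℕ) = a + b := by
  unfold glueFun; rw [dif_neg (by omega), dif_pos h]

lemma glueFun_gt {a b : ℕ} (A : Equiv.Perm (Fin a)) (B : Equiv.Perm (Fin b))
    {i : Fin (a + b + 1)} (h : a < (i : ℕ)) :
    ((glueFun A B i) : ℕ) = B ⟨(i : ℕ) - a - 1, by have := i.isLt; omega⟩ := by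
  unfold glueFun; rw [dif_neg (by omega), dif_neg (by omega)]

lemma glueFun_inj {a b : ℕ} (A : Equiv.Perm (Fin a)) (B : Equiv.Perm (Fin b)) :
    Function.Injective (glueFun A B) := by
  intro i j hij
  have hv : ((glueFun A B i) : ℕ) = ((glueFun A B j) : ℕ) := by rw [hij]
  have hi := i.isLt; have hj := j.isLt
  rcases lt_trichotomy (i : ℕ) a with h1 | h1 | h1 <;>
    rcases lt_trichotomy (j : ℕ) a with h2 | h2 | h2
  · rw [glueFun_lt A B h1, glueFun_lt A B h2] at hv
    have : A ⟨i, h1⟩ = A ⟨j, h2⟩ := Fin.ext (by omega)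
    have := A.injective this
    exact Fin.ext (by simpa [Fin.mk.injEq] using congrArg Fin.val this)
  · rw [glueFun_lt A B h1, glueFun_eq A B h2] at hv
    have := (A ⟨i, h1⟩).isLt; omega
  · rw [glueFun_lt A B h1, glueFun_gt A B h2] at hv
    have := (B ⟨(j : ℕ) - a - 1, by omega⟩).isLt; omega
  · rw [glueFun_eq A B h1, glueFun_lt A B h2] at hv
    have := (A ⟨j, h2⟩).isLt; omega
  · exact Fin.ext (by omega)
  · rw [glueFun_eq A B h1, glueFun_gt A B h2] at hv
    have := (B ⟨(j : ℕ) - a - 1, by omega⟩).isLt; omega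
  · rw [glueFun_gt A B h1, glueFun_lt A B h2] at hv
    have := (B ⟨(i : ℕ) - a - 1, by omega⟩).isLt; omega
  · rw [glueFun_gt A B h1, glueFun_eq A B h2] at hv
    have := (B ⟨(i : ℕ) - a - 1, by omega⟩).isLt; omega
  · rw [glueFun_gt A B h1, glueFun_gt A B h2] at hv
    have : B ⟨(i : ℕ) - a - 1, by omega⟩ = B ⟨(j : ℕ) - a - 1, by omega⟩ := Fin.ext (by omega)
    have := B.injective this
    have := congrArg Fin.val this
    simp only [Fin.mk.injEq] at this ⊢
    exact Fin.ext (by omega)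

noncomputable def glue {a b : ℕ} (A : Equiv.Perm (Fin a)) (B : Equiv.Perm (Fin b)) :
    Equiv.Perm (Fin (a + b + 1)) :=
  Equiv.ofBijective _ (Finite.injective_iff_bijective.mp (glueFun_inj A B))

lemma glue_apply_lt {a b : ℕ} (A : Equiv.Perm (Fin a)) (B : Equiv.Perm (Fin b))
    {i : Fin (a + b + 1)} (h : (i : ℕ) < a) :
    ((glue A B) i : ℕ) = b + A ⟨i, h⟩ := by
  rw [glue, Equiv.ofBijective_apply]; exact glueFun_lt A B h

lemma glue_apply_eq {a b : ℕ} (A : Equiv.Perm (Fin a)) (B : Equiv.Perm (Fin b))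
    {i : Fin (a + b + 1)} (h : (i : ℕ) = a) :
    ((glue A B) i : ℕ) = a + b := by
  rw [glue, Equiv.ofBijective_apply]; exact glueFun_eq A B h

lemma glue_apply_gt {a b : ℕ} (A : Equiv.Perm (Fin a)) (B : Equiv.Perm (Fin b))
    {i : Fin (a + b + 1)} (h : a < (i : ℕ)) :
    ((glue A B) i : ℕ) = B ⟨(i : ℕ) - a - 1, by have := i.isLt; omega⟩ := by
  rw [glue, Equiv.ofBijective_apply]; exact glueFun_gt A B h

lemma glue_symm_max {a b : ℕ} (A : Equiv.Perm (Fin a)) (B : Equiv.Perm (Fin b)) :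
    (((glue A B).symm ⟨a + b, by omega⟩ : Fin (a + b + 1)) : ℕ) = a := by
  have : (glue A B) ⟨a, by omega⟩ = ⟨a + b, by omega⟩ :=
    Fin.ext (glue_apply_eq A B rfl)
  rw [← this, Equiv.symm_apply_apply]

lemma glue_inj {a b : ℕ} {A A' : Equiv.Perm (Fin a)} {B B' : Equiv.Perm (Fin b)}
    (h : glue A B = glue A' B') : A = A' ∧ B = B' := by
  constructor
  · apply Equiv.ext; intro x
    have hx : ((x : ℕ)) < a := x.isLt
    have h1 : ((glue A B) ⟨x, by omega⟩ : ℕ) = ((glue A' B') ⟨x, by omega⟩ : ℕ) := by rw [h]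
    rw [glue_apply_lt A B (by exact hx), glue_apply_lt A' B' (by exact hx)] at h1
    exact Fin.ext (by simpa using h1)
  · apply Equiv.ext; intro x
    have hx : ((x : ℕ)) < b := x.isLt
    have hpf : a + 1 + (x : ℕ) < a + b + 1 := by omega
    have hlt : a < ((⟨a + 1 + (x : ℕ), hpf⟩ : Fin (a+b+1)) : ℕ) := by rw [Fin.val_mk]; omega
    have e1 : (glue A B) ⟨a + 1 + (x : ℕ), hpf⟩ = (glue A' B') ⟨a + 1 + (x : ℕ), hpf⟩ := by rw [h]
    have v1 := glue_apply_gt A B (i := ⟨a + 1 + (x : ℕ), hpf⟩) hlt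
    have v2 := glue_apply_gt A' B' (i := ⟨a + 1 + (x : ℕ), hpf⟩) hlt
    have e2 : ((glue A B) ⟨a + 1 + (x : ℕ), hpf⟩ : ℕ) = ((glue A' B') ⟨a + 1 + (x : ℕ), hpf⟩ : ℕ) := by rw [e1]
    rw [v1, v2] at e2
    simp only [Fin.val_mk, show a + 1 + (x : ℕ) - a - 1 = (x : ℕ) by omega, Fin.eta] at e2
    exact Fin.ext e2

lemma avoids_glue {a b : ℕ} {A : Equiv.Perm (Fin a)} {B : Equiv.Perm (Fin b)}
    (hA : Avoids132 A) (hB : Avoids132 B) : Avoids132 (glue A B) := by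
  rintro ⟨i, j, k, hij, hjk, h1, h2⟩
  rw [Fin.lt_def] at hij hjk h1 h2
  have hi := i.isLt; have hj := j.isLt; have hk := k.isLt
  rcases lt_trichotomy (i : ℕ) a with hia | hia | hia
  · rcases lt_trichotomy (k : ℕ) a with hka | hka | hka
    · -- all three < a : pattern in A
      have hja : (j : ℕ) < a := by omega
      apply hA
      refine ⟨⟨i, hia⟩, ⟨j, hja⟩, ⟨k, hka⟩, Fin.mk_lt_mk.mpr (by omega), Fin.mk_lt_mk.mpr (by omega), ?_, ?_⟩ <;>
        rw [Fin.lt_def]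
      · have e1 := glue_apply_lt A B hia; have e2 := glue_apply_lt A B hka; omega
      · have e1 := glue_apply_lt A B hka; have e2 := glue_apply_lt A B hja; omega
    · -- k = a: glue k is max, contradicts h2
      have e1 := glue_apply_eq A B hka
      have : ((glue A B) j : ℕ) < a + b + 1 := ((glue A B) j).isLt
      omega
    · -- i < a < k : values: glue i ≥ b > glue k
      have e1 := glue_apply_lt A B hia
      have e2 := glue_apply_gt A B hka
      have := (B ⟨(k : ℕ) - a - 1, by omega⟩).isLt
      omega
  · -- i = a : glue i is max, contradicts h1
    have e1 := glue_apply_eq A B hia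
    have : ((glue A B) k : ℕ) < a + b + 1 := ((glue A B) k).isLt
    omega
  · -- a < i < j < k : pattern in B
    have hja : a < (j : ℕ) := by omega
    have hka : a < (k : ℕ) := by omega
    apply hB
    refine ⟨⟨(i : ℕ) - a - 1, by omega⟩, ⟨(j : ℕ) - a - 1, by omega⟩, ⟨(k : ℕ) - a - 1, by omega⟩,
      Fin.mk_lt_mk.mpr (by omega), Fin.mk_lt_mk.mpr (by omega), ?_, ?_⟩ <;> rw [Fin.lt_def]
    · have e1 := glue_apply_gt A B hia; have e2 := glue_apply_gt A B hka; omega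
    · have e1 := glue_apply_gt A B hka; have e2 := glue_apply_gt A B hja; omega

lemma avoids_of_glue_left {a b : ℕ} {A : Equiv.Perm (Fin a)} {B : Equiv.Perm (Fin b)}
    (h : Avoids132 (glue A B)) : Avoids132 A := by
  rintro ⟨i, j, k, hij, hjk, h1, h2⟩
  rw [Fin.lt_def] at hij hjk h1 h2
  apply h
  have hi := i.isLt; have hj := j.isLt; have hk := k.isLt
  refine ⟨⟨i, by omega⟩, ⟨j, by omega⟩, ⟨k, by omega⟩, Fin.mk_lt_mk.mpr (by omega),
    Fin.mk_lt_mk.mpr (by omega), ?_, ?_⟩ <;> rw [Fin.lt_def]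
  · have e1 := glue_apply_lt A B (show ((⟨(i : ℕ), by omega⟩ : Fin (a+b+1)) : ℕ) < a from hi)
    have e2 := glue_apply_lt A B (show ((⟨(k : ℕ), by omega⟩ : Fin (a+b+1)) : ℕ) < a from hk)
    simp only [Fin.eta] at e1 e2
    omega
  · have e1 := glue_apply_lt A B (show ((⟨(k : ℕ), by omega⟩ : Fin (a+b+1)) : ℕ) < a from hk)
    have e2 := glue_apply_lt A B (show ((⟨(j : ℕ), by omega⟩ : Fin (a+b+1)) : ℕ) < a from hj)
    simp only [Fin.eta] at e1 e2
    omega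

lemma avoids_of_glue_right {a b : ℕ} {A : Equiv.Perm (Fin a)} {B : Equiv.Perm (Fin b)}
    (h : Avoids132 (glue A B)) : Avoids132 B := by
  rintro ⟨i, j, k, hij, hjk, h1, h2⟩
  rw [Fin.lt_def] at hij hjk h1 h2
  apply h
  have hi := i.isLt; have hj := j.isLt; have hk := k.isLt
  refine ⟨⟨a + 1 + i, by omega⟩, ⟨a + 1 + j, by omega⟩, ⟨a + 1 + k, by omega⟩,
    Fin.mk_lt_mk.mpr (by omega), Fin.mk_lt_mk.mpr (by omega), ?_, ?_⟩ <;> rw [Fin.lt_def]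
  · have e1 := glue_apply_gt A B (show a < ((⟨a + 1 + (i : ℕ), by omega⟩ : Fin (a+b+1)) : ℕ) by rw [Fin.val_mk]; omega)
    have e2 := glue_apply_gt A B (show a < ((⟨a + 1 + (k : ℕ), by omega⟩ : Fin (a+b+1)) : ℕ) by rw [Fin.val_mk]; omega)
    simp only [show ∀ x : ℕ, a + 1 + x - a - 1 = x from fun x => by omega, Fin.eta] at e1 e2
    omega
  · have e1 := glue_apply_gt A B (show a < ((⟨a + 1 + (k : ℕ), by omega⟩ : Fin (a+b+1)) : ℕ) by rw [Fin.val_mk]; omega)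
    have e2 := glue_apply_gt A B (show a < ((⟨a + 1 + (j : ℕ), by omega⟩ : Fin (a+b+1)) : ℕ) by rw [Fin.val_mk]; omega)
    simp only [show ∀ x : ℕ, a + 1 + x - a - 1 = x from fun x => by omega, Fin.eta] at e1 e2
    omega
lemma mem_descentSet_glue {a b : ℕ} (A : Equiv.Perm (Fin a)) (B : Equiv.Perm (Fin b)) (i : ℕ) :
    i ∈ DescentSet (glue A B) ↔
      i ∈ DescentSet A ∨ (b ≠ 0 ∧ i = a + 1) ∨ (∃ j ∈ DescentSet B, i = a + 1 + j) := by
  constructor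
  · intro hi
    rw [mem_DescentSet] at hi
    obtain ⟨⟨h1, h2⟩, hlt⟩ := hi
    rcases lt_trichotomy i a with hia | hia | hia
    · -- descent inside A
      left
      have e1 := glue_apply_lt A B (i := ⟨i, h2⟩) (by exact hia)
      have e2 := glue_apply_lt A B (i := ⟨i - 1, by omega⟩) (by show i - 1 < a; omega)
      rw [mem_DescentSet]
      refine ⟨⟨h1, hia⟩, ?_⟩
      simp only [Fin.val_mk] at e1 e2
      omega
    · -- i = a : impossible, entry a is the max
      exfalso
      subst hia
      have e1 := glue_apply_eq A B (i := ⟨i, h2⟩) (by exact rfl)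
      have := ((glue A B) ⟨i - 1, by omega⟩).isLt
      omega
    · rcases Nat.eq_or_lt_of_le (show a + 1 ≤ i by omega) with hia1 | hia1
      · right; left
        exact ⟨by omega, hia1.symm⟩
      · -- descent inside B
        right; right
        have e1 := glue_apply_gt A B (i := ⟨i, h2⟩) (by show a < i; omega)
        have e2 := glue_apply_gt A B (i := ⟨i - 1, by omega⟩) (by show a < i - 1; omega)
        simp only [Fin.val_mk] at e1 e2
        refine ⟨i - a - 1, ?_, by omega⟩
        rw [mem_DescentSet]
        refine ⟨⟨by omega, by omega⟩, ?_⟩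
        simp only [show i - 1 - a - 1 = i - a - 1 - 1 from by omega] at e2
        omega
  · intro hi
    rcases hi with hi | ⟨hb, rfl⟩ | ⟨j, hj, rfl⟩
    · rw [mem_DescentSet] at hi ⊢
      obtain ⟨⟨h1, h2⟩, hlt⟩ := hi
      refine ⟨⟨h1, by omega⟩, ?_⟩
      have e1 := glue_apply_lt A B (i := ⟨i, by omega⟩) (by exact h2)
      have e2 := glue_apply_lt A B (i := ⟨i - 1, by omega⟩) (by show i - 1 < a; omega)
      simp only [Fin.val_mk] at e1 e2
      omega
    · rw [mem_DescentSet]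
      refine ⟨⟨by omega, by omega⟩, ?_⟩
      have e1 := glue_apply_gt A B (i := ⟨a + 1, by omega⟩) (by show a < a + 1; omega)
      have e2 := glue_apply_eq A B (i := ⟨a + 1 - 1, by omega⟩) (by show a + 1 - 1 = a; omega)
      have := (B ⟨a + 1 - a - 1, by omega⟩).isLt
      simp only [Fin.val_mk] at e1 e2
      omega
    · rw [mem_DescentSet] at hj ⊢
      obtain ⟨⟨hj1, hj2⟩, hlt⟩ := hj
      refine ⟨⟨by omega, by omega⟩, ?_⟩
      have e1 := glue_apply_gt A B (i := ⟨a + 1 + j, by omega⟩) (by show a < a + 1 + j; omega)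
      have e2 := glue_apply_gt A B (i := ⟨a + 1 + j - 1, by omega⟩) (by show a < a + 1 + j - 1; omega)
      simp only [Fin.val_mk] at e1 e2
      simp only [show a + 1 + j - a - 1 = j from by omega] at e1
      simp only [show a + 1 + j - 1 - a - 1 = j - 1 from by omega] at e2
      omega
lemma descent_glue_sigma {a b : ℕ} (A : Equiv.Perm (Fin a)) (B : Equiv.Perm (Fin b))
    (A' : Equiv.Perm (Fin b)) (B' : Equiv.Perm (Fin a))
    (hA' : DescentSet A' = sigmaSet b (DescentSet B))
    (hB' : DescentSet B' = sigmaSet a (DescentSet A)) :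
    DescentSet (glue A' B') = sigmaSet (b + a + 1) (DescentSet (glue A B)) := by
  ext i
  rw [mem_descentSet_glue, mem_sigmaSet]
  rw [hA', hB']
  simp only [mem_sigmaSet, mem_descentSet_glue, Finset.mem_filter]
  constructor
  · rintro (⟨hi1, hi2, hBn⟩ | ⟨ha0, rfl⟩ | ⟨j, ⟨hj1, hj2, hAn⟩, rfl⟩)
    · refine ⟨by omega, by omega, ?_⟩
      rintro (hDA | ⟨hb0, heq⟩ | ⟨j, hjB, heq⟩)
      · have := descentSet_bounds hDA; omega
      · omega
      · have hbnd := descentSet_bounds hjB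
        have hjv : j = b - i := by omega
        subst hjv; exact hBn hjB
    · refine ⟨by omega, by omega, ?_⟩
      rintro (hDA | ⟨hb0, heq⟩ | ⟨j, hjB, heq⟩)
      · have := descentSet_bounds hDA; omega
      · omega
      · have := descentSet_bounds hjB; omega
    · refine ⟨by omega, by omega, ?_⟩
      rintro (hDA | ⟨hb0, heq⟩ | ⟨j', hjB, heq⟩)
      · have hbd := descentSet_bounds hDA
        rw [show b + a + 1 - (b + 1 + j) = a - j from by omega] at hDA
        exact hAn hDA
      · omega
      · have := descentSet_bounds hjB; omega
  · rintro ⟨hi1, hi2, hn⟩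
    push_neg at hn
    obtain ⟨hnA, hnMid, hnB⟩ := hn
    rcases lt_trichotomy i b with h | h | h
    · left
      refine ⟨by omega, by omega, ?_⟩
      intro hmem
      exact hnB (b - i) hmem (by omega)
    · exfalso
      exact hnMid (by omega) (by omega)
    · rcases Nat.eq_or_lt_of_le (show b + 1 ≤ i by omega) with h2 | h2
      · right; left; exact ⟨by omega, h2.symm⟩
      · right; right
        refine ⟨i - b - 1, ⟨by omega, by omega, ?_⟩, by omega⟩
        intro hmem
        rw [show a - (i - b - 1) = b + a + 1 - i from by omega] at hmem
        exact hnA hmem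
lemma permCast_rfl {n : ℕ} (q : Equiv.Perm (Fin n)) : (finCongr rfl).permCongr q = q := by
  apply Equiv.ext; intro x
  simp [Equiv.permCongr_apply, finCongr_refl]

lemma avoids_permCast {m n : ℕ} (h : m = n) (q : Equiv.Perm (Fin m)) :
    Avoids132 ((finCongr h).permCongr q) ↔ Avoids132 q := by
  subst h; rw [permCast_rfl]

lemma descent_permCast {m n : ℕ} (h : m = n) (q : Equiv.Perm (Fin m)) :
    DescentSet ((finCongr h).permCongr q) = DescentSet q := by
  subst h; rw [permCast_rfl]

lemma permCast_symm_val {m n : ℕ} (h : m = n) (q : Equiv.Perm (Fin m)) (v : Fin n) :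
    ((((finCongr h).permCongr q).symm v : Fin n) : ℕ) = ((q.symm ⟨v, by omega⟩ : Fin m) : ℕ) := by
  subst h; rw [permCast_rfl]

section Struct

variable {a b : ℕ} (p : Equiv.Perm (Fin (a + b + 1))) (hp : Avoids132 p)
  (hmax : (p ⟨a, by omega⟩ : ℕ) = a + b)

include hp hmax

omit hp in
lemma struct_ne_max (k : Fin (a + b + 1)) (hk : (k : ℕ) ≠ a) : (p k : ℕ) < a + b := by
  have h1 : (p k : ℕ) < a + b + 1 := (p k).isLt
  rcases Nat.eq_or_lt_of_le (show (p k : ℕ) ≤ a + b by omega) with h | h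
  · exfalso
    have : p k = p ⟨a, by omega⟩ := Fin.ext (by rw [hmax]; exact h)
    have := p.injective this
    exact hk (by simpa using congrArg Fin.val this)
  · exact h

lemma struct0 (i k : Fin (a + b + 1)) (hi : (i : ℕ) < a) (hk : a < (k : ℕ)) :
    (p k : ℕ) < (p i : ℕ) := by
  by_contra hle
  push_neg at hle
  have hne : (p i : ℕ) ≠ (p k : ℕ) := by
    intro he
    have := p.injective (Fin.ext he)
    have := congrArg Fin.val this
    omega
  have h1 : (p i : ℕ) < (p k : ℕ) := by omega
  apply hp
  refine ⟨i, ⟨a, by omega⟩, k, ?_, ?_, ?_, ?_⟩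
  · rw [Fin.lt_def]; simpa using hi
  · rw [Fin.lt_def]; simpa using hk
  · rw [Fin.lt_def]; exact h1
  · rw [Fin.lt_def]
    rw [hmax]
    exact struct_ne_max p hmax k (by omega)

lemma struct_right (k : Fin (a + b + 1)) (hk : a < (k : ℕ)) : (p k : ℕ) < b := by
  classical
  have hinj : Set.InjOn (fun x : Fin (a + 1) => p ⟨x, by omega⟩) (Finset.univ : Finset (Fin (a+1))) := by
    intro x _ y _ hxy
    have := p.injective hxy
    have := congrArg Fin.val this
    simp only at this
    exact Fin.ext this
  have hmaps : ∀ x : Fin (a + 1), x ∈ (Finset.univ : Finset (Fin (a+1))) →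
      (fun x : Fin (a + 1) => p ⟨x, by omega⟩) x ∈ Finset.Ioi (p k) := by
    intro x _
    dsimp only
    rw [Finset.mem_Ioi, Fin.lt_def]
    rcases Nat.eq_or_lt_of_le (show (x : ℕ) ≤ a by have := x.isLt; omega) with h | h
    · have : ((⟨(x : ℕ), by omega⟩ : Fin (a+b+1))) = ⟨a, by omega⟩ := Fin.ext (by simpa using h)
      rw [this, hmax]
      exact struct_ne_max p hmax k (by omega)
    · exact struct0 p hp hmax ⟨x, by omega⟩ k (by simpa using h) hk
  have hcard := Finset.card_le_card_of_injOn _ hmaps hinj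
  rw [Fin.card_Ioi] at hcard
  simp only [Finset.card_univ, Fintype.card_fin] at hcard
  omega

lemma struct_left (i : Fin (a + b + 1)) (hi : (i : ℕ) < a) :
    b ≤ (p i : ℕ) ∧ (p i : ℕ) < a + b := by
  classical
  constructor
  · have hinj : Set.InjOn (fun x : Fin b => p ⟨a + 1 + x, by have := x.isLt; omega⟩)
        (Finset.univ : Finset (Fin b)) := by
      intro x _ y _ hxy
      have := p.injective hxy
      have := congrArg Fin.val this
      simp only at this
      exact Fin.ext (by omega)
    have hmaps : ∀ x : Fin b, x ∈ (Finset.univ : Finset (Fin b)) →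
        (fun x : Fin b => p ⟨a + 1 + x, by have := x.isLt; omega⟩) x ∈ Finset.Iio (p i) := by
      intro x _
      dsimp only
      rw [Finset.mem_Iio, Fin.lt_def]
      exact struct0 p hp hmax i ⟨a + 1 + x, by have := x.isLt; omega⟩ hi (by simp; omega)
    have hcard := Finset.card_le_card_of_injOn _ hmaps hinj
    rw [Fin.card_Iio] at hcard
    simp only [Finset.card_univ, Fintype.card_fin] at hcard
    omega
  · exact struct_ne_max p hmax i (by omega)

noncomputable def extractA : Equiv.Perm (Fin a) :=
  Equiv.ofBijective
    (fun i => (⟨(p ⟨i, by have := i.isLt; omega⟩ : ℕ) - b, by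
      have h := struct_left p hp hmax ⟨i, by have := i.isLt; omega⟩ (by simpa using i.isLt)
      omega⟩ : Fin a))
    (Finite.injective_iff_bijective.mp (by
      intro x y hxy
      have hx := struct_left p hp hmax ⟨x, by have := x.isLt; omega⟩ (by simpa using x.isLt)
      have hy := struct_left p hp hmax ⟨y, by have := y.isLt; omega⟩ (by simpa using y.isLt)
      have := congrArg Fin.val hxy
      simp only [Fin.val_mk] at this
      have : p ⟨x, by have := x.isLt; omega⟩ = p ⟨y, by have := y.isLt; omega⟩ :=
        Fin.ext (by omega)
      have := congrArg Fin.val (p.injective this)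
      simp only [Fin.val_mk] at this
      exact Fin.ext this))

noncomputable def extractB : Equiv.Perm (Fin b) :=
  Equiv.ofBijective
    (fun j => (⟨(p ⟨a + 1 + j, by have := j.isLt; omega⟩ : ℕ), by
      exact struct_right p hp hmax ⟨a + 1 + j, by have := j.isLt; omega⟩ (by simp; omega)⟩ : Fin b))
    (Finite.injective_iff_bijective.mp (by
      intro x y hxy
      have := congrArg Fin.val hxy
      simp only [Fin.val_mk] at this
      have : p ⟨a + 1 + x, by have := x.isLt; omega⟩ = p ⟨a + 1 + y, by have := y.isLt; omega⟩ :=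
        Fin.ext this
      have := congrArg Fin.val (p.injective this)
      simp only [Fin.val_mk] at this
      exact Fin.ext (by omega)))

lemma extractA_apply (i : Fin a) :
    ((extractA p hp hmax i : Fin a) : ℕ) = (p ⟨i, by have := i.isLt; omega⟩ : ℕ) - b := by
  rw [extractA, Equiv.ofBijective_apply]

lemma extractB_apply (j : Fin b) :
    ((extractB p hp hmax j : Fin b) : ℕ) = (p ⟨a + 1 + j, by have := j.isLt; omega⟩ : ℕ) := by
  rw [extractB, Equiv.ofBijective_apply]

lemma glue_extract : glue (extractA p hp hmax) (extractB p hp hmax) = p := by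
  apply Equiv.ext; intro i; apply Fin.ext
  rcases lt_trichotomy (i : ℕ) a with h | h | h
  · rw [glue_apply_lt _ _ h, extractA_apply]
    have hs := struct_left p hp hmax i h
    simp only [Fin.val_mk, Fin.eta]
    omega
  · have hieq : i = ⟨a, by omega⟩ := Fin.ext h
    rw [glue_apply_eq _ _ h, hieq, hmax]
  · rw [glue_apply_gt _ _ h, extractB_apply]
    have := i.isLt
    simp only [Fin.val_mk, show a + 1 + ((i : ℕ) - a - 1) = (i : ℕ) from by omega, Fin.eta]

lemma extractA_avoids : Avoids132 (extractA p hp hmax) :=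
  avoids_of_glue_left (by rw [glue_extract p hp hmax]; exact hp)

lemma extractB_avoids : Avoids132 (extractB p hp hmax) :=
  avoids_of_glue_right (B := extractB p hp hmax) (by rw [glue_extract p hp hmax]; exact hp)

end Struct
lemma permCast_apply_val {m n : ℕ} (h : m = n) (q : Equiv.Perm (Fin m)) (i : Fin n) :
    ((((finCongr h).permCongr q) i : Fin n) : ℕ) = ((q ⟨i, by omega⟩ : Fin m) : ℕ) := by
  subst h; rw [permCast_rfl]

noncomputable def stepTAux {n : ℕ}
    (T : ∀ m, m < n → {p : Equiv.Perm (Fin m) // Avoids132 p} →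
      {p : Equiv.Perm (Fin m) // Avoids132 p})
    (a : ℕ) (p : Equiv.Perm (Fin n)) (hp : Avoids132 p) (ha : a < n)
    (hmax : (p ⟨a, ha⟩ : ℕ) = n - 1) : {q : Equiv.Perm (Fin n) // Avoids132 q} :=
  ⟨(finCongr (show (n - 1 - a) + a + 1 = n by omega)).permCongr
      (glue
        (T (n - 1 - a) (by omega)
          ⟨extractB ((finCongr (show n = a + (n - 1 - a) + 1 by omega)).permCongr p)
              ((avoids_permCast _ p).mpr hp)
              (by rw [permCast_apply_val]
                  show (p ⟨a, ha⟩ : ℕ) = a + (n - 1 - a)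
                  omega),
            extractB_avoids _ _ _⟩).1
        (T a (by omega)
          ⟨extractA ((finCongr (show n = a + (n - 1 - a) + 1 by omega)).permCongr p)
              ((avoids_permCast _ p).mpr hp)
              (by rw [permCast_apply_val]
                  show (p ⟨a, ha⟩ : ℕ) = a + (n - 1 - a)
                  omega),
            extractA_avoids _ _ _⟩).1),
    (avoids_permCast _ _).mpr (avoids_glue (T _ _ _).2 (T _ _ _).2)⟩
lemma stepTAux_descent {n : ℕ}
    (T : ∀ m, m < n → {p : Equiv.Perm (Fin m) // Avoids132 p} →
      {p : Equiv.Perm (Fin m) // Avoids132 p})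
    (hTdes : ∀ m (hm : m < n) x, DescentSet ((T m hm x).1) = sigmaSet m (DescentSet x.1))
    (a : ℕ) (p : Equiv.Perm (Fin n)) (hp : Avoids132 p) (ha : a < n)
    (hmax : (p ⟨a, ha⟩ : ℕ) = n - 1) :
    DescentSet (stepTAux T a p hp ha hmax).1 = sigmaSet n (DescentSet p) := by
  unfold stepTAux
  dsimp only
  rw [descent_permCast]
  rw [descent_glue_sigma _ _ _ _ (hTdes _ _ _) (hTdes _ _ _)]
  rw [glue_extract]
  rw [descent_permCast]
  rw [show n - 1 - a + a + 1 = n from by omega]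

lemma stepTAux_symm_max {n : ℕ}
    (T : ∀ m, m < n → {p : Equiv.Perm (Fin m) // Avoids132 p} →
      {p : Equiv.Perm (Fin m) // Avoids132 p})
    (a : ℕ) (p : Equiv.Perm (Fin n)) (hp : Avoids132 p) (ha : a < n)
    (hmax : (p ⟨a, ha⟩ : ℕ) = n - 1) :
    (((stepTAux T a p hp ha hmax).1.symm ⟨n - 1, by omega⟩ : Fin n) : ℕ) = n - 1 - a := by
  unfold stepTAux
  dsimp only
  rw [permCast_symm_val]
  have hidx : (⟨((⟨n - 1, by omega⟩ : Fin n) : ℕ), by omega⟩ : Fin ((n - 1 - a) + a + 1))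
      = ⟨(n - 1 - a) + a, by omega⟩ := Fin.ext (by simp; omega)
  rw [hidx, glue_symm_max]

lemma stepTAux_inj {n : ℕ}
    (T : ∀ m, m < n → {p : Equiv.Perm (Fin m) // Avoids132 p} →
      {p : Equiv.Perm (Fin m) // Avoids132 p})
    (hTinj : ∀ m (hm : m < n), Function.Injective (T m hm))
    (a : ℕ) (p q : Equiv.Perm (Fin n)) (hp : Avoids132 p) (hq : Avoids132 q) (ha : a < n)
    (hmaxp : (p ⟨a, ha⟩ : ℕ) = n - 1) (hmaxq : (q ⟨a, ha⟩ : ℕ) = n - 1)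
    (h : stepTAux T a p hp ha hmaxp = stepTAux T a q hq ha hmaxq) : p = q := by
  unfold stepTAux at h
  rw [Subtype.mk.injEq] at h
  have h2 := (Equiv.permCongr (finCongr (show (n - 1 - a) + a + 1 = n by omega))).injective h
  obtain ⟨hBeq, hAeq⟩ := glue_inj h2
  have hB := congrArg Subtype.val (hTinj _ _ (Subtype.ext hBeq))
  have hA := congrArg Subtype.val (hTinj _ _ (Subtype.ext hAeq))
  dsimp only at hA hB
  have hpq : (finCongr (show n = a + (n - 1 - a) + 1 by omega)).permCongr p
      = (finCongr (show n = a + (n - 1 - a) + 1 by omega)).permCongr q := by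
    rw [← glue_extract ((finCongr (show n = a + (n - 1 - a) + 1 by omega)).permCongr p)
          ((avoids_permCast _ p).mpr hp)
          (by rw [permCast_apply_val]
              show (p ⟨a, ha⟩ : ℕ) = a + (n - 1 - a)
              omega),
        ← glue_extract ((finCongr (show n = a + (n - 1 - a) + 1 by omega)).permCongr q)
          ((avoids_permCast _ q).mpr hq)
          (by rw [permCast_apply_val]
              show (q ⟨a, ha⟩ : ℕ) = a + (n - 1 - a)
              omega),
        hA, hB]
  exact (Equiv.permCongr (finCongr (show n = a + (n - 1 - a) + 1 by omega))).injective hpq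
lemma stepTAux_congr {n : ℕ}
    (T : ∀ m, m < n → {p : Equiv.Perm (Fin m) // Avoids132 p} →
      {p : Equiv.Perm (Fin m) // Avoids132 p})
    (a a' : ℕ) (h : a = a') (p : Equiv.Perm (Fin n)) (hp : Avoids132 p)
    (ha : a < n) (ha' : a' < n)
    (hmax : (p ⟨a, ha⟩ : ℕ) = n - 1) (hmax' : (p ⟨a', ha'⟩ : ℕ) = n - 1) :
    stepTAux T a p hp ha hmax = stepTAux T a' p hp ha' hmax' := by
  subst h; rfl

noncomputable def stepT {n : ℕ} (hn : 0 < n)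
    (T : ∀ m, m < n → {p : Equiv.Perm (Fin m) // Avoids132 p} →
      {p : Equiv.Perm (Fin m) // Avoids132 p})
    (x : {p : Equiv.Perm (Fin n) // Avoids132 p}) : {p : Equiv.Perm (Fin n) // Avoids132 p} :=
  stepTAux T ((x.1.symm ⟨n - 1, by omega⟩ : Fin n) : ℕ) x.1 x.2
    (x.1.symm ⟨n - 1, by omega⟩).isLt
    (by show (x.1 (x.1.symm ⟨n - 1, by omega⟩) : ℕ) = n - 1
        rw [Equiv.apply_symm_apply])

lemma stepT_descent {n : ℕ} (hn : 0 < n)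
    (T : ∀ m, m < n → {p : Equiv.Perm (Fin m) // Avoids132 p} →
      {p : Equiv.Perm (Fin m) // Avoids132 p})
    (hTdes : ∀ m (hm : m < n) x, DescentSet ((T m hm x).1) = sigmaSet m (DescentSet x.1))
    (p : {p : Equiv.Perm (Fin n) // Avoids132 p}) :
    DescentSet (stepT hn T p).1 = sigmaSet n (DescentSet p.1) := by
  unfold stepT
  exact stepTAux_descent T hTdes _ p.1 p.2 _ _

lemma stepT_inj {n : ℕ} (hn : 0 < n)
    (T : ∀ m, m < n → {p : Equiv.Perm (Fin m) // Avoids132 p} →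
      {p : Equiv.Perm (Fin m) // Avoids132 p})
    (hTinj : ∀ m (hm : m < n), Function.Injective (T m hm)) :
    Function.Injective (stepT hn T) := by
  intro x y h
  unfold stepT at h
  have b1 := (x.1.symm (⟨n - 1, by omega⟩ : Fin n)).isLt
  have b2 := (y.1.symm (⟨n - 1, by omega⟩ : Fin n)).isLt
  have hax : ((x.1.symm ⟨n - 1, by omega⟩ : Fin n) : ℕ)
      = ((y.1.symm ⟨n - 1, by omega⟩ : Fin n) : ℕ) := by
    have h1 := congrArg
      (fun z : {p : Equiv.Perm (Fin n) // Avoids132 p} =>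
        ((z.1.symm ⟨n - 1, by omega⟩ : Fin n) : ℕ)) h
    simp only [stepTAux_symm_max] at h1
    omega
  have hmaxx : (x.1 ⟨((x.1.symm ⟨n - 1, by omega⟩ : Fin n) : ℕ), by omega⟩ : ℕ) = n - 1 := by
    show (x.1 (x.1.symm ⟨n - 1, by omega⟩) : ℕ) = n - 1
    rw [Equiv.apply_symm_apply]
  have hmaxy' : (y.1 ⟨((x.1.symm ⟨n - 1, by omega⟩ : Fin n) : ℕ), by omega⟩ : ℕ) = n - 1 := by
    have he : (⟨((x.1.symm ⟨n - 1, by omega⟩ : Fin n) : ℕ), by omega⟩ : Fin n)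
        = y.1.symm ⟨n - 1, by omega⟩ := Fin.ext (by simp only [Fin.val_mk]; exact hax)
    rw [he, Equiv.apply_symm_apply]
  have hy2 : stepTAux T ((x.1.symm ⟨n - 1, by omega⟩ : Fin n) : ℕ) y.1 y.2 (by omega) hmaxy'
      = stepTAux T ((y.1.symm ⟨n - 1, by omega⟩ : Fin n) : ℕ) y.1 y.2
          (y.1.symm ⟨n - 1, by omega⟩).isLt
          (by show (y.1 (y.1.symm ⟨n - 1, by omega⟩) : ℕ) = n - 1
              rw [Equiv.apply_symm_apply]) :=
    stepTAux_congr T _ _ hax y.1 y.2 _ _ _ _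
  have hfin := stepTAux_inj T hTinj _ x.1 y.1 x.2 y.2 (by omega) hmaxx hmaxy'
    (h.trans hy2.symm)
  exact Subtype.ext hfin
lemma main_induction (n : ℕ) :
    ∃ T : {p : Equiv.Perm (Fin n) // Avoids132 p} → {p : Equiv.Perm (Fin n) // Avoids132 p},
      Function.Injective T ∧
      ∀ p, DescentSet (T p).1 = sigmaSet n (DescentSet p.1) := by
  induction n using Nat.strong_induction_on with
  | _ n IH =>
    rcases Nat.eq_zero_or_pos n with rfl | hn
    · refine ⟨id, fun x y h => h, ?_⟩
      intro p
      have h0 : DescentSet p.1 = ∅ := by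
        ext i
        simp only [mem_DescentSet, Finset.notMem_empty, iff_false]
        rintro ⟨⟨h1, h2⟩, -⟩
        omega
      rw [id_eq, h0]
      ext j
      simp only [mem_sigmaSet, Finset.notMem_empty, false_iff]
      rintro ⟨h1, h2, -⟩
      omega
    · choose T hT using fun m (hm : m < n) => IH m hm
      exact ⟨stepT hn T, stepT_inj hn T (fun m hm => (hT m hm).1),
        stepT_descent hn T (fun m hm x => (hT m hm).2 x)⟩


/-- The poset `P_n` of 132-avoiding permutations of `[n]`, ordered by
containment of descent sets, is self-dual: there is a bijection `g` of the set of
132-avoiding permutations of `[n]` onto itself such that `D(x) ⊆ D(y)` iff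
`D(g y) ⊆ D(g x)`. -/
theorem stmt_7 (n : ℕ) (hn : 0 < n) :
    ∃ g : {p : Equiv.Perm (Fin n) // Avoids132 p} ≃ {p : Equiv.Perm (Fin n) // Avoids132 p},
      ∀ x y : {p : Equiv.Perm (Fin n) // Avoids132 p},
        DescentSet x.val ⊆ DescentSet y.val ↔
        DescentSet (g y).val ⊆ DescentSet (g x).val := by

  obtain ⟨T, hinj, hdes⟩ := main_induction n
  refine ⟨Equiv.ofBijective T (Finite.injective_iff_bijective.mp hinj), ?_⟩
  intro x y
  have hx : (Equiv.ofBijective T (Finite.injective_iff_bijective.mp hinj) x) = T x := rfl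
  have hy : (Equiv.ofBijective T (Finite.injective_iff_bijective.mp hinj) y) = T y := rfl
  rw [hx, hy, hdes x, hdes y]
  exact sigma_anti_iff (fun i hi => descentSet_bounds hi) (fun i hi => descentSet_bounds hi)
end

section
/- Let p be a 132-avoiding permutation of [n] and let 1 ≤ i ≤ n-1. Then i is a descent of p (i.e., p_i > p_{i+1}) if and only if p_{i+1} is a left-to-right minimum of p, that is, p_{i+1} < p_j for every j with 1 ≤ j ≤ i. -/
/-- Let `p` be a 132-avoiding permutation of `[n]` and `1 ≤ i ≤ n-1`. Then
`i` is a descent of `p` (i.e. `p_i > p_{i+1}`, in 1-based indexing, so `p ⟨i-1⟩ > p ⟨i⟩` in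
0-based indexing) iff `p_{i+1}` is a left-to-right minimum, i.e. `p_{i+1} < p_j` for all
`1 ≤ j ≤ i`. -/
theorem stmt_9 (n : ℕ) (p : Equiv.Perm (Fin n)) (hp : Avoids132 p)
    (i : ℕ) (h1 : 1 ≤ i) (h2 : i < n) :
    p ⟨i, h2⟩ < p ⟨i - 1, by omega⟩ ↔
      ∀ j (hj1 : 1 ≤ j) (hj2 : j ≤ i), p ⟨i, h2⟩ < p ⟨j - 1, by omega⟩ := by
  constructor
  · intro hd j hj1 hj2
    rcases eq_or_lt_of_le hj2 with rfl | hji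
    · exact hd
    · by_contra hle
      push_neg at hle
      have hne : p ⟨j - 1, by omega⟩ ≠ p ⟨i, h2⟩ := by
        intro h
        have := p.injective h
        simp only [Fin.mk.injEq] at this
        omega
      have hlt : p ⟨j - 1, by omega⟩ < p ⟨i, h2⟩ := lt_of_le_of_ne hle hne
      exact hp ⟨⟨j - 1, by omega⟩, ⟨i - 1, by omega⟩, ⟨i, h2⟩,
        by simp [Fin.lt_def]; omega, by simp [Fin.lt_def]; omega, hlt, hd⟩
  · intro h
    exact h i h1 le_rfl
end

section
/- Let p be a 132-avoiding permutation of [n] whose smallest descent is t with t > 1, i.e., p_1 < p_2 < ... < p_t and p_t > p_{t+1}. Then the entries p_1, p_2, ..., p_t are consecutive integers: p_i = p_1 + (i - 1) for all 1 ≤ i ≤ t. -/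
/-- Let `p` be a 132-avoiding permutation of `[n]` whose smallest descent
is `t > 1`, i.e. `p_1 < p_2 < ⋯ < p_t` and `p_t > p_{t+1}` (1-based indexing, so `p_i` is
`p ⟨i-1⟩` in 0-based indexing). Then `p_1, …, p_t` are consecutive integers:
`p_i = p_1 + (i-1)` for `1 ≤ i ≤ t`. -/
theorem stmt_10 (n : ℕ) (p : Equiv.Perm (Fin n)) (hp : Avoids132 p)
    (t : ℕ) (ht : 1 < t) (htn : t < n)
    (hasc : ∀ i (hi1 : 1 ≤ i) (hi2 : i < t), p ⟨i - 1, by omega⟩ < p ⟨i, by omega⟩)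
    (hdesc : p ⟨t, htn⟩ < p ⟨t - 1, by omega⟩) :
    ∀ i (hi1 : 1 ≤ i) (hi2 : i ≤ t),
      (p ⟨i - 1, by omega⟩ : ℕ) = (p ⟨0, by omega⟩ : ℕ) + (i - 1) := by
  -- monotonicity on the prefix
  have mono : ∀ b (hb : b < t) a (hab : a ≤ b),
      (p ⟨a, by omega⟩ : ℕ) ≤ (p ⟨b, by omega⟩ : ℕ) := by
    intro b
    induction b with
    | zero => intro hb a hab; interval_cases a; exact le_refl _
    | succ m ih =>
      intro hb a hab
      rcases Nat.eq_or_lt_of_le hab with h | h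
      · subst h; exact le_refl _
      · have h1 : (p ⟨a, by omega⟩ : ℕ) ≤ (p ⟨m, by omega⟩ : ℕ) :=
          ih (by omega) a (by omega)
        have h2 := hasc (m + 1) (by omega) hb
        have h2' : (p ⟨m, by omega⟩ : ℕ) < (p ⟨m + 1, by omega⟩ : ℕ) := by
          simpa using h2
        omega
  -- consecutive entries in the prefix differ by exactly 1
  have step : ∀ j (hj1 : 1 ≤ j) (hj2 : j < t),
      (p ⟨j, by omega⟩ : ℕ) = (p ⟨j - 1, by omega⟩ : ℕ) + 1 := by
    intro j hj1 hj2
    have hlt : (p ⟨j - 1, by omega⟩ : ℕ) < (p ⟨j, by omega⟩ : ℕ) := hasc j hj1 hj2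
    by_contra hne
    have hgap : (p ⟨j - 1, by omega⟩ : ℕ) + 1 < (p ⟨j, by omega⟩ : ℕ) := by omega
    have hvn : (p ⟨j - 1, by omega⟩ : ℕ) + 1 < n := by
      have := (p ⟨j, by omega⟩).isLt; omega
    obtain ⟨q, hq⟩ : ∃ q, p q = ⟨(p ⟨j - 1, by omega⟩ : ℕ) + 1, hvn⟩ :=
      ⟨p.symm _, Equiv.apply_symm_apply p _⟩
    have hqv : (p q : ℕ) = (p ⟨j - 1, by omega⟩ : ℕ) + 1 := congrArg Fin.val hq
    have h1 : j - 1 < t := by omega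
    have h2 := mono (j - 1) h1
    have hqt : t ≤ (q : ℕ) := by
      by_contra hqt
      push_neg at hqt
      rcases le_or_gt (q : ℕ) (j - 1) with hc | hc
      · have h3 := h2 (q : ℕ) hc
        have hqeq : (⟨(q : ℕ), by omega⟩ : Fin n) = q := Fin.eta q q.isLt
        rw [hqeq] at h3
        omega
      · have h4 : (q : ℕ) < t := hqt
        have h5 : j ≤ (q : ℕ) := by omega
        have h6 := mono (q : ℕ) h4 j h5
        have hqeq : (⟨(q : ℕ), by omega⟩ : Fin n) = q := Fin.eta q q.isLt
        rw [hqeq] at h6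
        omega
    have h7 : t - 1 < t := by omega
    have h8 : j ≤ t - 1 := by omega
    have hmax := mono (t - 1) h7 j h8
    refine hp ⟨⟨j - 1, by omega⟩, ⟨t - 1, by omega⟩, q, ?_, ?_, ?_, ?_⟩
    · show j - 1 < t - 1; omega
    · show t - 1 < (q : ℕ); omega
    · show (p ⟨j - 1, by omega⟩ : ℕ) < (p q : ℕ); omega
    · show (p q : ℕ) < (p ⟨t - 1, by omega⟩ : ℕ); omega
  intro i hi1 hi2
  induction i with
  | zero => omega
  | succ m ih =>
    rcases Nat.eq_zero_or_pos m with hm | hm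
    · subst hm; simp
    · have IH := ih (by omega) (by omega)
      have hs := step m (by omega) (by omega)
      have hm1 : m + 1 - 1 = m := by omega
      simp only [hm1] at *
      omega
end

section
/- Let n be a positive integer, let S ⊆ [n-1] be nonempty, and suppose the smallest element t of S satisfies t > 1. Then the number of 132-avoiding permutations of [n] with descent set exactly S equals the number of 132-avoiding permutations of [n-(t-1)] with descent set exactly S-(t-1) = {s - (t-1) : s ∈ S}. -/
set_option maxHeartbeats 1000000

namespace Stmt11
open Equiv

/-- delete value `a` from the scale -/
def delN (a v : ℕ) : ℕ := if v < a then v else v - 1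
/-- insert value `b` into the scale -/
def liftN (b x : ℕ) : ℕ := if x < b then x else x + 1

lemma delN_lt_delN {a v w : ℕ} (hv : v ≠ a) (hw : w ≠ a) :
    (delN a v < delN a w ↔ v < w) := by unfold delN; split <;> split <;> omega
lemma liftN_lt_liftN {b x y : ℕ} : liftN b x < liftN b y ↔ x < y := by
  unfold liftN; split <;> split <;> omega
lemma liftN_delN {a v : ℕ} (h : v ≠ a) : liftN a (delN a v) = v := by
  unfold liftN delN; split <;> (try split) <;> omega
lemma delN_liftN {b x : ℕ} : delN b (liftN b x) = x := by
  unfold delN liftN; split <;> (try split) <;> omega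

variable {m : ℕ}

def Fmap (p : Perm (Fin (m+2))) (i : Fin (m+1)) : Fin (m+1) :=
  ⟨delN (p ⟨0, by omega⟩ : ℕ) (p i.succ : ℕ), by
    have h1 := (p ⟨0, by omega⟩).isLt
    have h2 := (p i.succ).isLt
    unfold delN; split <;> omega⟩

lemma Fmap_val (p : Perm (Fin (m+2))) (i : Fin (m+1)) :
    (Fmap p i : ℕ) = delN (p ⟨0, by omega⟩ : ℕ) (p i.succ : ℕ) := rfl

lemma succ_ne (p : Perm (Fin (m+2))) (i : Fin (m+1)) :
    (p i.succ : ℕ) ≠ (p ⟨0, by omega⟩ : ℕ) := by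
  intro e
  have h2 := p.injective (Fin.ext e)
  have h3 := congrArg Fin.val h2
  simp [Fin.val_succ] at h3

lemma Fmap_inj (p : Perm (Fin (m+2))) : Function.Injective (Fmap p) := by
  intro i j h
  have hv := congrArg Fin.val h
  rw [Fmap_val, Fmap_val] at hv
  have hi := succ_ne p i
  have hj := succ_ne p j
  have : (p i.succ : ℕ) = (p j.succ : ℕ) := by
    unfold delN at hv; split at hv <;> split at hv <;> omega
  exact Fin.succ_injective _ (p.injective (Fin.ext this))

noncomputable def Fperm (p : Perm (Fin (m+2))) : Perm (Fin (m+1)) :=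
  Equiv.ofBijective (Fmap p) (Finite.injective_iff_bijective.mp (Fmap_inj p))

lemma Fperm_apply (p : Perm (Fin (m+2))) (i : Fin (m+1)) : Fperm p i = Fmap p i := rfl

def Gmap (q : Perm (Fin (m+1))) (i : Fin (m+2)) : Fin (m+2) :=
  if h : (i : ℕ) = 0 then ⟨(q ⟨0, by omega⟩ : ℕ), by have := (q ⟨0, by omega⟩).isLt; omega⟩
  else ⟨liftN (q ⟨0, by omega⟩ : ℕ) (q ⟨(i : ℕ) - 1, by have := i.isLt; omega⟩ : ℕ), by
    have h1 := (q ⟨0, by omega⟩).isLt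
    have h2 := (q ⟨(i : ℕ) - 1, by have := i.isLt; omega⟩).isLt
    unfold liftN; split <;> omega⟩

lemma Gmap_val_zero (q : Perm (Fin (m+1))) (i : Fin (m+2)) (h : (i : ℕ) = 0) :
    (Gmap q i : ℕ) = (q ⟨0, by omega⟩ : ℕ) := by rw [Gmap]; simp [h]

lemma Gmap_val_pos (q : Perm (Fin (m+1))) (i : Fin (m+2)) (h : (i : ℕ) ≠ 0) :
    (Gmap q i : ℕ) = liftN (q ⟨0, by omega⟩ : ℕ) (q ⟨(i : ℕ) - 1, by have := i.isLt; omega⟩ : ℕ) := by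
  rw [Gmap]; simp [h]

lemma liftN_ne (b x : ℕ) : liftN b x ≠ b := by unfold liftN; split <;> omega

lemma Gmap_inj (q : Perm (Fin (m+1))) : Function.Injective (Gmap q) := by
  intro i j h
  have hv := congrArg Fin.val h
  by_cases hi : (i : ℕ) = 0 <;> by_cases hj : (j : ℕ) = 0
  · exact Fin.ext (by omega)
  · rw [Gmap_val_zero q i hi, Gmap_val_pos q j hj] at hv
    exact absurd hv.symm (liftN_ne _ _)
  · rw [Gmap_val_pos q i hi, Gmap_val_zero q j hj] at hv
    exact absurd hv (liftN_ne _ _)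
  · rw [Gmap_val_pos q i hi, Gmap_val_pos q j hj] at hv
    have h2 : (q ⟨(i:ℕ)-1, by have := i.isLt; omega⟩ : ℕ) = (q ⟨(j:ℕ)-1, by have := j.isLt; omega⟩ : ℕ) := by
      revert hv; unfold liftN; split <;> split <;> omega
    have h3 := congrArg Fin.val (q.injective (Fin.ext h2))
    simp only at h3
    exact Fin.ext (by omega)

noncomputable def Gperm (q : Perm (Fin (m+1))) : Perm (Fin (m+2)) :=
  Equiv.ofBijective (Gmap q) (Finite.injective_iff_bijective.mp (Gmap_inj q))

lemma Gperm_apply (q : Perm (Fin (m+1))) (i : Fin (m+2)) : Gperm q i = Gmap q i := rfl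

lemma Gperm_val_zero (q : Perm (Fin (m+1))) (i : Fin (m+2)) (h : (i : ℕ) = 0) :
    (Gperm q i : ℕ) = (q ⟨0, by omega⟩ : ℕ) := Gmap_val_zero q i h

lemma Gperm_val_pos (q : Perm (Fin (m+1))) (i : Fin (m+2)) (h : (i : ℕ) ≠ 0) :
    (Gperm q i : ℕ) = liftN (q ⟨0, by omega⟩ : ℕ) (q ⟨(i : ℕ) - 1, by have := i.isLt; omega⟩ : ℕ) :=
  Gmap_val_pos q i h

lemma Fperm_val (p : Perm (Fin (m+2))) (i : Fin (m+1)) :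
    (Fperm p i : ℕ) = delN (p ⟨0, by omega⟩ : ℕ) (p i.succ : ℕ) := rfl

/-- In a 132-avoiding permutation with an ascent at the start, the second entry is
one more than the first. -/
lemma first_consec (p : Perm (Fin (m+2))) (hA : Avoids132 p)
    (h01 : (p ⟨0, by omega⟩ : ℕ) < (p ⟨1, by omega⟩ : ℕ)) :
    (p ⟨1, by omega⟩ : ℕ) = (p ⟨0, by omega⟩ : ℕ) + 1 := by
  by_contra h
  have hvlt : (p ⟨1, by omega⟩ : ℕ) - 1 < m + 2 := by have := (p ⟨1, by omega⟩).isLt; omega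
  obtain ⟨k, hpk⟩ : ∃ k, p k = ⟨(p ⟨1, by omega⟩ : ℕ) - 1, hvlt⟩ :=
    ⟨p.symm _, p.apply_symm_apply _⟩
  have hval : (p k : ℕ) = (p ⟨1, by omega⟩ : ℕ) - 1 := by rw [hpk]
  have hk0 : (k : ℕ) ≠ 0 := by
    intro e
    have h1 : p ⟨0, by omega⟩ = p k := congrArg p (Fin.ext e.symm)
    have h2 := congrArg Fin.val h1
    omega
  have hk1 : (k : ℕ) ≠ 1 := by
    intro e
    have h1 : p ⟨1, by omega⟩ = p k := congrArg p (Fin.ext e.symm)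
    have h2 := congrArg Fin.val h1
    omega
  refine hA ⟨⟨0, by omega⟩, ⟨1, by omega⟩, k, Fin.mk_lt_mk.mpr (by omega), ?_, ?_, ?_⟩
  · exact Fin.lt_def.mpr (show 1 < (k : ℕ) by omega)
  · exact Fin.lt_def.mpr (show (p ⟨0, by omega⟩ : ℕ) < (p k : ℕ) by omega)
  · exact Fin.lt_def.mpr (show (p k : ℕ) < (p ⟨1, by omega⟩ : ℕ) by omega)

lemma GF (p : Perm (Fin (m+2))) (hp1 : (p ⟨1, by omega⟩ : ℕ) = (p ⟨0, by omega⟩ : ℕ) + 1) :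
    Gperm (Fperm p) = p := by
  have ha : (Fperm p ⟨0, by omega⟩ : ℕ) = (p ⟨0, by omega⟩ : ℕ) := by
    rw [Fperm_val]
    have e : ((⟨0, by omega⟩ : Fin (m+1)).succ) = (⟨1, by omega⟩ : Fin (m+2)) := Fin.ext (by simp)
    rw [e, hp1]
    unfold delN; split <;> omega
  apply Equiv.ext
  intro i
  apply Fin.ext
  by_cases hi : (i : ℕ) = 0
  · rw [Gperm_val_zero _ _ hi, ha]
    exact congrArg (fun z => (p z : ℕ)) (Fin.ext hi.symm)
  · rw [Gperm_val_pos _ _ hi]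
    have e2 : (Fperm p ⟨(i : ℕ) - 1, by have := i.isLt; omega⟩ : ℕ)
        = delN (p ⟨0, by omega⟩ : ℕ) (p i : ℕ) := by
      rw [Fperm_val]
      have e : ((⟨(i : ℕ) - 1, by have := i.isLt; omega⟩ : Fin (m+1)).succ) = i :=
        Fin.ext (by simp; omega)
      rw [e]
    rw [e2, ha]
    have hne : (p i : ℕ) ≠ (p ⟨0, by omega⟩ : ℕ) := by
      intro e
      have := congrArg Fin.val (p.injective (Fin.ext e))
      simp only at this
      omega
    exact liftN_delN hne

lemma FG (q : Perm (Fin (m+1))) : Fperm (Gperm q) = q := by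
  apply Equiv.ext
  intro i
  apply Fin.ext
  rw [Fperm_val]
  rw [Gperm_val_zero q _ rfl, Gperm_val_pos q i.succ (by simp)]
  rw [delN_liftN]
  exact congrArg (fun z => (q z : ℕ)) (Fin.ext (by simp))
/-- canonical zero of `Fin (m+1)` -/
def z1 : Fin (m+1) := ⟨0, Nat.succ_pos m⟩
/-- canonical zero of `Fin (m+2)` -/
def z2 : Fin (m+2) := ⟨0, Nat.succ_pos (m+1)⟩
/-- canonical one of `Fin (m+2)` -/
def u2 : Fin (m+2) := ⟨1, Nat.succ_lt_succ (Nat.succ_pos m)⟩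

lemma Fperm_val' (p : Perm (Fin (m+2))) (i : Fin (m+1)) :
    (Fperm p i : ℕ) = delN (p z2 : ℕ) (p i.succ : ℕ) := rfl

lemma Gperm_val_zero' (q : Perm (Fin (m+1))) (i : Fin (m+2)) (h : (i : ℕ) = 0) :
    (Gperm q i : ℕ) = (q z1 : ℕ) := Gmap_val_zero q i h

lemma Gperm_val_pos' (q : Perm (Fin (m+1))) (i : Fin (m+2)) (j : Fin (m+1))
    (hj : (j : ℕ) + 1 = (i : ℕ)) :
    (Gperm q i : ℕ) = liftN (q z1 : ℕ) (q j : ℕ) := by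
  rw [Gperm_val_pos q i (by omega)]
  exact congrArg₂ (fun a b : Fin (m+1) => liftN (q a : ℕ) (q b : ℕ)) rfl
    (Fin.ext (show (i : ℕ) - 1 = (j : ℕ) by omega))

lemma lt_liftN {b x : ℕ} : b < liftN b x ↔ b ≤ x := by unfold liftN; split <;> omega

lemma avoids_F (p : Perm (Fin (m+2))) (hA : Avoids132 p) : Avoids132 (Fperm p) := by
  rintro ⟨i, j, k, hij, hjk, h1, h2⟩
  rw [Fin.lt_def] at h1 h2
  rw [Fperm_val', Fperm_val'] at h1 h2
  refine hA ⟨i.succ, j.succ, k.succ, Fin.succ_lt_succ_iff.mpr hij,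
    Fin.succ_lt_succ_iff.mpr hjk, ?_, ?_⟩
  · exact Fin.lt_def.mpr ((delN_lt_delN (succ_ne p i) (succ_ne p k)).mp h1)
  · exact Fin.lt_def.mpr ((delN_lt_delN (succ_ne p k) (succ_ne p j)).mp h2)

lemma avoids_G (q : Perm (Fin (m+1))) (hA : Avoids132 q) : Avoids132 (Gperm q) := by
  rintro ⟨i, j, k, hij, hjk, h1, h2⟩
  rw [Fin.lt_def] at hij hjk h1 h2
  have hj0 : 0 < (j : ℕ) := by omega
  have hk0 : 0 < (k : ℕ) := by omega
  have pj : (j : ℕ) - 1 < m + 1 := by have := j.isLt; omega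
  have pk : (k : ℕ) - 1 < m + 1 := by have := k.isLt; omega
  have vj : ((⟨(j : ℕ) - 1, pj⟩ : Fin (m+1)) : ℕ) = (j : ℕ) - 1 := rfl
  have vk : ((⟨(k : ℕ) - 1, pk⟩ : Fin (m+1)) : ℕ) = (k : ℕ) - 1 := rfl
  have vz : ((z1 : Fin (m+1)) : ℕ) = 0 := rfl
  rw [Gperm_val_pos' q j ⟨(j : ℕ) - 1, pj⟩ (by omega)] at h2
  rw [Gperm_val_pos' q k ⟨(k : ℕ) - 1, pk⟩ (by omega)] at h1 h2
  by_cases hi : (i : ℕ) = 0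
  · rw [Gperm_val_zero' q i hi] at h1
    have hbk : (q z1 : ℕ) ≤ (q ⟨(k : ℕ) - 1, pk⟩ : ℕ) := lt_liftN.mp h1
    have hkj : (q ⟨(k : ℕ) - 1, pk⟩ : ℕ) < (q ⟨(j : ℕ) - 1, pj⟩ : ℕ) := liftN_lt_liftN.mp h2
    have hne : (q ⟨(k : ℕ) - 1, pk⟩ : ℕ) ≠ (q z1 : ℕ) := by
      intro e
      have h3 : (k : ℕ) - 1 = (0 : ℕ) := congrArg Fin.val (q.injective (Fin.ext e))
      omega
    have hj2 : 2 ≤ (j : ℕ) := by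
      by_contra hj2
      have ej : (q ⟨(j : ℕ) - 1, pj⟩ : ℕ) = (q z1 : ℕ) :=
        congrArg (fun z => (q z : ℕ)) (Fin.ext (show (j : ℕ) - 1 = 0 by omega))
      omega
    refine hA ⟨z1, ⟨(j : ℕ) - 1, pj⟩, ⟨(k : ℕ) - 1, pk⟩, ?_, ?_, ?_, ?_⟩
    · exact Fin.lt_def.mpr (show 0 < (j : ℕ) - 1 by omega)
    · exact Fin.lt_def.mpr (show (j : ℕ) - 1 < (k : ℕ) - 1 by omega)
    · exact Fin.lt_def.mpr (lt_of_le_of_ne hbk (Ne.symm hne))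
    · exact Fin.lt_def.mpr hkj
  · have pi : (i : ℕ) - 1 < m + 1 := by have := i.isLt; omega
    have vi : ((⟨(i : ℕ) - 1, pi⟩ : Fin (m+1)) : ℕ) = (i : ℕ) - 1 := rfl
    rw [Gperm_val_pos' q i ⟨(i : ℕ) - 1, pi⟩ (by omega)] at h1
    refine hA ⟨⟨(i : ℕ) - 1, pi⟩, ⟨(j : ℕ) - 1, pj⟩, ⟨(k : ℕ) - 1, pk⟩, ?_, ?_, ?_, ?_⟩
    · exact Fin.lt_def.mpr (show (i : ℕ) - 1 < (j : ℕ) - 1 by omega)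
    · exact Fin.lt_def.mpr (show (j : ℕ) - 1 < (k : ℕ) - 1 by omega)
    · exact Fin.lt_def.mpr (liftN_lt_liftN.mp h1)
    · exact Fin.lt_def.mpr (liftN_lt_liftN.mp h2)
lemma descent_G (q : Perm (Fin (m+1))) :
    DescentSet (Gperm q) = (DescentSet q).image (· + 1) := by
  ext x
  simp only [DescentSet, Finset.mem_image, Finset.mem_filter, Finset.mem_range]
  constructor
  · rintro ⟨hx, ⟨hx1, hx2⟩, hlt⟩
    rw [Fin.lt_def] at hlt
    by_cases he : x = 1
    · exfalso
      subst he
      rw [Gperm_val_zero' q ⟨1-1, by omega⟩ rfl] at hlt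
      rw [Gperm_val_pos' q ⟨1, hx2⟩ z1 rfl] at hlt
      unfold liftN at hlt
      split at hlt <;> omega
    · have py2 : x - 1 < m + 1 := by omega
      have py : x - 1 - 1 < m + 1 := by omega
      rw [Gperm_val_pos' q ⟨x, hx2⟩ ⟨x-1, py2⟩ (show x-1+1 = x by omega)] at hlt
      rw [Gperm_val_pos' q ⟨x-1, by omega⟩ ⟨x-1-1, py⟩ (show x-1-1+1 = x-1 by omega)] at hlt
      refine ⟨x-1, ⟨by omega, ⟨by omega, py2⟩, ?_⟩, by omega⟩
      exact Fin.lt_def.mpr (liftN_lt_liftN.mp hlt)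
  · rintro ⟨y, ⟨hy, ⟨hy1, hy2⟩, hlt⟩, rfl⟩
    refine ⟨by omega, ⟨by omega, by omega⟩, ?_⟩
    rw [Fin.lt_def]
    rw [Gperm_val_pos' q ⟨y+1, by omega⟩ ⟨y, hy2⟩ rfl]
    rw [Gperm_val_pos' q ⟨y+1-1, by omega⟩ ⟨y-1, by omega⟩ (show y-1+1 = y+1-1 by omega)]
    exact liftN_lt_liftN.mpr (Fin.lt_def.mp hlt)
lemma ascent_of (p : Perm (Fin (m+2))) (h1 : 1 ∉ DescentSet p) :
    (p ⟨0, by omega⟩ : ℕ) < (p ⟨1, by omega⟩ : ℕ) := by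
  simp only [DescentSet, Finset.mem_filter, Finset.mem_range] at h1
  push_neg at h1
  have h3 := h1 (by omega) ⟨by omega, by omega⟩
  have h4 : p ⟨0, by omega⟩ ≤ p ⟨1, by omega⟩ := h3
  have h5 : p ⟨0, by omega⟩ ≠ p ⟨1, by omega⟩ := by
    intro e
    have h6 : (0 : ℕ) = 1 := congrArg Fin.val (p.injective e)
    omega
  exact Fin.lt_def.mp (lt_of_le_of_ne h4 h5)

noncomputable def stepEquiv (m : ℕ) (S : Finset ℕ) (h2 : ∀ s ∈ S, 2 ≤ s) :
    {p : Perm (Fin (m+2)) // Avoids132 p ∧ DescentSet p = S} ≃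
    {q : Perm (Fin (m+1)) // Avoids132 q ∧ DescentSet q = S.image (· - 1)} where
  toFun := fun x => ⟨Fperm x.1, avoids_F x.1 x.2.1, by
    obtain ⟨p, hA, hD⟩ := x
    have h1 : 1 ∉ DescentSet p := by
      rw [hD]; intro hc; exact absurd (h2 1 hc) (by omega)
    have hgf : Gperm (Fperm p) = p := GF p (first_consec p hA (ascent_of p h1))
    have hDD : (DescentSet (Fperm p)).image (· + 1) = S := by
      rw [← descent_G (Fperm p), hgf, hD]
    calc DescentSet (Fperm p)
        = ((DescentSet (Fperm p)).image (· + 1)).image (· - 1) := by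
          rw [Finset.image_image]
          have he : ((· - 1) ∘ (· + 1) : ℕ → ℕ) = id := funext fun y => by simp
          rw [he, Finset.image_id]
      _ = S.image (· - 1) := by rw [hDD]⟩
  invFun := fun x => ⟨Gperm x.1, avoids_G x.1 x.2.1, by
    rw [descent_G, x.2.2, Finset.image_image]
    refine (Finset.image_congr ?_).trans Finset.image_id
    intro s hs
    simp only [Function.comp, id]
    have := h2 s (Finset.mem_coe.mp hs)
    omega⟩
  left_inv := fun x => by
    obtain ⟨p, hA, hD⟩ := x
    have h1 : 1 ∉ DescentSet p := by
      rw [hD]; intro hc; exact absurd (h2 1 hc) (by omega)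
    exact Subtype.ext (GF p (first_consec p hA (ascent_of p h1)))
  right_inv := fun x => Subtype.ext (FG x.1)

lemma step (m : ℕ) (S : Finset ℕ) (h2 : ∀ s ∈ S, 2 ≤ s) :
    Nat.card {p : Perm (Fin (m+2)) // Avoids132 p ∧ DescentSet p = S} =
    Nat.card {q : Perm (Fin (m+1)) // Avoids132 q ∧ DescentSet q = S.image (· - 1)} :=
  Nat.card_congr (stepEquiv m S h2)
lemma aux (t : ℕ) : ∀ (n : ℕ) (S : Finset ℕ), S ⊆ Finset.Icc 1 (n-1) → ∀ hne : S.Nonempty,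
    S.min' hne = t → 1 < t →
    Nat.card {p : Perm (Fin n) // Avoids132 p ∧ DescentSet p = S} =
    Nat.card {q : Perm (Fin (n - (t-1))) // Avoids132 q ∧
      DescentSet q = S.image (· - (t-1))} := by
  induction t using Nat.strong_induction_on with
  | _ t ih =>
    intro n S hS hne hmin ht
    have htS : t ∈ S := hmin ▸ S.min'_mem hne
    have hle : ∀ s ∈ S, t ≤ s := fun s hs => hmin ▸ S.min'_le s hs
    have htn : t ≤ n - 1 := (Finset.mem_Icc.mp (hS htS)).2
    have hn3 : 3 ≤ n := by omega
    obtain ⟨m, rfl⟩ : ∃ m, n = m + 2 := ⟨n - 2, by omega⟩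
    have h2 : ∀ s ∈ S, 2 ≤ s := fun s hs => le_trans ht (hle s hs)
    rcases Nat.eq_or_lt_of_le (show 2 ≤ t from ht) with h | h
    · subst h
      exact step m S h2
    · have hS' : S.image (· - 1) ⊆ Finset.Icc 1 (m + 1 - 1) := by
        intro x hx
        simp only [Finset.mem_image] at hx
        obtain ⟨s, hs, rfl⟩ := hx
        have h3 := hle s hs
        have h4 := (Finset.mem_Icc.mp (hS hs)).2
        simp only [Finset.mem_Icc]
        omega
      have hne' : (S.image (· - 1)).Nonempty := hne.image _
      have hmin' : (S.image (· - 1)).min' hne' = t - 1 := by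
        apply le_antisymm
        · exact Finset.min'_le _ _ (Finset.mem_image_of_mem _ htS)
        · apply Finset.le_min'
          intro y hy
          simp only [Finset.mem_image] at hy
          obtain ⟨s, hs, rfl⟩ := hy
          have := hle s hs
          omega
      have hrec := ih (t-1) (by omega) (m+1) (S.image (· - 1)) hS' hne' hmin' (by omega)
      rw [step m S h2, hrec]
      have himg : (S.image (· - 1)).image (· - (t-1-1)) = S.image (· - (t-1)) := by
        rw [Finset.image_image]
        apply Finset.image_congr
        intro s hs
        simp only [Function.comp]
        have := hle s (Finset.mem_coe.mp hs)
        omega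
      rw [himg, show m + 1 - (t-1-1) = m + 2 - (t-1) by omega]
end Stmt11

/-- Let `S ⊆ [n-1]` be nonempty with smallest element `t > 1`. Then the
number of 132-avoiding permutations of `[n]` with descent set exactly `S` equals the number
of 132-avoiding permutations of `[n-(t-1)]` with descent set exactly
`S - (t-1) = {s - (t-1) : s ∈ S}`. -/
theorem stmt_11 (n : ℕ) (hn : 0 < n) (S : Finset ℕ) (hS : S ⊆ Finset.Icc 1 (n - 1))
    (hne : S.Nonempty) (ht : 1 < S.min' hne) :
    Nat.card {p : Equiv.Perm (Fin n) // Avoids132 p ∧ DescentSet p = S} =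
    Nat.card {p : Equiv.Perm (Fin (n - (S.min' hne - 1))) // Avoids132 p ∧
      DescentSet p = S.image (fun s => s - (S.min' hne - 1))} :=
  Stmt11.aux (S.min' hne) n S hS hne rfl ht
end

section
/- Let n be a positive integer, let t > 1, and let T ⊆ [n-1] be a set containing all of n-t+1, n-t+2, ..., n-1 but not containing n-t (if n - t ≥ 1). Then every 132-avoiding permutation p of [n] with descent set exactly T has (p_{n-t+2}, p_{n-t+3}, ..., p_n) = (t-1, t-2, ..., 1), and consequently the number of 132-avoiding permutations of [n] with descent set exactly T equals the number of 132-avoiding permutations of [n-(t-1)] with descent set exactly T ∩ [n-t]. -/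
namespace Stmt12Aux

lemma mem_descentSet {n : ℕ} (p : Equiv.Perm (Fin n)) (i : ℕ) (h1 : 1 ≤ i) (h2 : i < n) :
    i ∈ DescentSet p ↔ ((p ⟨i, h2⟩ : ℕ) < (p ⟨i - 1, by omega⟩ : ℕ)) := by
  unfold DescentSet
  simp only [Finset.mem_filter, Finset.mem_range]
  constructor
  · rintro ⟨-, h, hlt⟩
    exact hlt
  · intro hlt
    exact ⟨h2, ⟨h1, h2⟩, hlt⟩

lemma descentSet_bounds {n : ℕ} (p : Equiv.Perm (Fin n)) (i : ℕ) (hi : i ∈ DescentSet p) :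
    1 ≤ i ∧ i < n := by
  unfold DescentSet at hi
  simp only [Finset.mem_filter, Finset.mem_range] at hi
  obtain ⟨h, h', -⟩ := hi
  exact ⟨h'.1, h⟩

/-- The key combinatorial fact, at the level of ℕ. -/
lemma key (n t : ℕ) (ht : 1 < t) (htn : t ≤ n) (f : ℕ → ℕ)
    (hinj : ∀ a b, a < n → b < n → f a = f b → a = b)
    (hsurj : ∀ v, v < n → ∃ a, a < n ∧ f a = v)
    (hav : ∀ i j k, i < j → j < k → k < n → f i < f k → ¬ f k < f j)
    (hdesc : ∀ c, c ≤ t - 2 → f (n - 1 - c) < f (n - 1 - c - 1)) :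
    ∀ c, c ≤ t - 2 → f (n - 1 - c) = c := by
  intro c
  induction c using Nat.strong_induction_on with
  | _ c IH =>
    intro hc
    by_contra hne
    rcases Nat.lt_or_ge (f (n - 1 - c)) c with hlt | hge
    · have h1 := IH _ hlt (by omega)
      have h2 := hinj _ _ (by omega) (by omega) (h1.trans rfl : f (n - 1 - f (n - 1 - c)) = f (n - 1 - c))
      omega
    · have hcv : c < f (n - 1 - c) := by omega
      obtain ⟨i, hin, hfi⟩ := hsurj c (by omega)
      have hilt : i < n - 1 - c := by
        by_contra h'
        push_neg at h'
        rcases eq_or_lt_of_le (show n - 1 - i ≤ c by omega) with he | hlt'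
        · have hieq : i = n - 1 - c := by omega
          rw [hieq] at hfi
          exact hne hfi
        · have h4 := IH _ hlt' (by omega)
          rw [show n - 1 - (n - 1 - i) = i by omega] at h4
          omega
      rcases eq_or_lt_of_le (show i ≤ n - 1 - c - 1 by omega) with he | hlt2
      · have := hdesc c hc
        rw [← he] at this
        omega
      · exact hav i (n - 1 - c - 1) (n - 1 - c) hlt2 (by omega) (by omega) (by omega)
          (hdesc c hc)

/-- Bridge: the ℕ-level function associated to a permutation of `Fin n`. -/
def pf {n : ℕ} (p : Equiv.Perm (Fin n)) : ℕ → ℕ :=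
  fun a => if h : a < n then (p ⟨a, h⟩ : ℕ) else 0

lemma pf_eq {n : ℕ} (p : Equiv.Perm (Fin n)) (a : ℕ) (h : a < n) :
    pf p a = (p ⟨a, h⟩ : ℕ) := dif_pos h

lemma pf_lt {n : ℕ} (p : Equiv.Perm (Fin n)) (a : ℕ) (h : a < n) : pf p a < n := by
  rw [pf_eq p a h]; exact (p ⟨a, h⟩).isLt

lemma pf_inj {n : ℕ} (p : Equiv.Perm (Fin n)) :
    ∀ a b, a < n → b < n → pf p a = pf p b → a = b := by
  intro a b ha hb hab
  rw [pf_eq p a ha, pf_eq p b hb] at hab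
  have := p.injective (Fin.ext hab)
  exact congrArg Fin.val this

lemma pf_surj {n : ℕ} (p : Equiv.Perm (Fin n)) :
    ∀ v, v < n → ∃ a, a < n ∧ pf p a = v := by
  intro v hv
  refine ⟨(p.symm ⟨v, hv⟩ : ℕ), (p.symm ⟨v, hv⟩).isLt, ?_⟩
  rw [pf_eq p _ (p.symm ⟨v, hv⟩).isLt]
  rw [show (⟨((p.symm ⟨v, hv⟩ : Fin n) : ℕ), (p.symm ⟨v, hv⟩).isLt⟩ : Fin n) = p.symm ⟨v, hv⟩
    from Fin.ext rfl, Equiv.apply_symm_apply]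

lemma pf_av {n : ℕ} (p : Equiv.Perm (Fin n)) (hav : Avoids132 p) :
    ∀ i j k, i < j → j < k → k < n → pf p i < pf p k → ¬ pf p k < pf p j := by
  intro i j k hij hjk hkn h1 h2
  have hin : i < n := by omega
  have hjn : j < n := by omega
  rw [pf_eq p i hin, pf_eq p k hkn] at h1
  rw [pf_eq p k hkn, pf_eq p j hjn] at h2
  exact hav ⟨⟨i, hin⟩, ⟨j, hjn⟩, ⟨k, hkn⟩, hij, hjk, h1, h2⟩

end Stmt12Aux

namespace Stmt12Aux

def phiF (n t : ℕ) (ht : 1 < t) (htn : t ≤ n) (q : Equiv.Perm (Fin (n - t + 1))) :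
    Fin n → Fin n := fun i =>
  if h : (i : ℕ) < n - t + 1 then
    ⟨(q ⟨(i : ℕ), h⟩ : ℕ) + (t - 1), by
      have h2 := (q ⟨(i : ℕ), h⟩).isLt; omega⟩
  else ⟨n - 1 - (i : ℕ), by have := i.isLt; omega⟩

lemma phiF_val_lt (n t : ℕ) (ht : 1 < t) (htn : t ≤ n) (q : Equiv.Perm (Fin (n - t + 1)))
    (i : Fin n) (h : (i : ℕ) < n - t + 1) :
    (phiF n t ht htn q i : ℕ) = (q ⟨(i : ℕ), h⟩ : ℕ) + (t - 1) := by
  simp only [phiF, dif_pos h]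

lemma phiF_val_ge (n t : ℕ) (ht : 1 < t) (htn : t ≤ n) (q : Equiv.Perm (Fin (n - t + 1)))
    (i : Fin n) (h : ¬ (i : ℕ) < n - t + 1) :
    (phiF n t ht htn q i : ℕ) = n - 1 - (i : ℕ) := by
  simp only [phiF, dif_neg h]

lemma phiF_inj (n t : ℕ) (ht : 1 < t) (htn : t ≤ n) (q : Equiv.Perm (Fin (n - t + 1))) :
    Function.Injective (phiF n t ht htn q) := by
  intro a b hab
  have hab' : (phiF n t ht htn q a : ℕ) = (phiF n t ht htn q b : ℕ) := congrArg Fin.val hab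
  have han := a.isLt
  have hbn := b.isLt
  by_cases ha : (a : ℕ) < n - t + 1 <;> by_cases hb : (b : ℕ) < n - t + 1
  · rw [phiF_val_lt n t ht htn q a ha, phiF_val_lt n t ht htn q b hb] at hab'
    have : q ⟨(a : ℕ), ha⟩ = q ⟨(b : ℕ), hb⟩ := Fin.ext (by omega)
    have := congrArg Fin.val (q.injective this)
    exact Fin.ext this
  · rw [phiF_val_lt n t ht htn q a ha, phiF_val_ge n t ht htn q b hb] at hab'
    have := (q ⟨(a : ℕ), ha⟩).isLt
    omega
  · rw [phiF_val_ge n t ht htn q a ha, phiF_val_lt n t ht htn q b hb] at hab'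
    have := (q ⟨(b : ℕ), hb⟩).isLt
    omega
  · rw [phiF_val_ge n t ht htn q a ha, phiF_val_ge n t ht htn q b hb] at hab'
    exact Fin.ext (by omega)

noncomputable def Phi (n t : ℕ) (ht : 1 < t) (htn : t ≤ n) (q : Equiv.Perm (Fin (n - t + 1))) :
    Equiv.Perm (Fin n) :=
  Equiv.ofBijective _ (Finite.injective_iff_bijective.mp (phiF_inj n t ht htn q))

lemma Phi_apply (n t : ℕ) (ht : 1 < t) (htn : t ≤ n) (q : Equiv.Perm (Fin (n - t + 1)))
    (i : Fin n) : Phi n t ht htn q i = phiF n t ht htn q i := rfl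

end Stmt12Aux

namespace Stmt12Aux

lemma avoids_phi_iff (n t : ℕ) (ht : 1 < t) (htn : t ≤ n) (q : Equiv.Perm (Fin (n - t + 1))) :
    Avoids132 (Phi n t ht htn q) ↔ Avoids132 q := by
  unfold Avoids132
  apply not_congr
  constructor
  · rintro ⟨i, j, k, hij, hjk, h1, h2⟩
    have hij' : (i : ℕ) < j := hij
    have hjk' : (j : ℕ) < k := hjk
    have h1' : (Phi n t ht htn q i : ℕ) < (Phi n t ht htn q k : ℕ) := h1
    have h2' : (Phi n t ht htn q k : ℕ) < (Phi n t ht htn q j : ℕ) := h2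
    rw [Phi_apply, Phi_apply] at h1'
    rw [Phi_apply, Phi_apply] at h2'
    have hkm : (k : ℕ) < n - t + 1 := by
      by_contra hk
      have hk1 := phiF_val_ge n t ht htn q k hk
      have hkn := k.isLt
      by_cases hi : (i : ℕ) < n - t + 1
      · have hi1 := phiF_val_lt n t ht htn q i hi
        omega
      · have hi1 := phiF_val_ge n t ht htn q i hi
        omega
    have him : (i : ℕ) < n - t + 1 := by omega
    have hjm : (j : ℕ) < n - t + 1 := by omega
    rw [phiF_val_lt n t ht htn q i him, phiF_val_lt n t ht htn q k hkm] at h1'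
    rw [phiF_val_lt n t ht htn q k hkm, phiF_val_lt n t ht htn q j hjm] at h2'
    refine ⟨⟨(i : ℕ), him⟩, ⟨(j : ℕ), hjm⟩, ⟨(k : ℕ), hkm⟩, ?_, ?_, ?_, ?_⟩
    · exact hij'
    · exact hjk'
    · show (q ⟨(i : ℕ), him⟩ : ℕ) < (q ⟨(k : ℕ), hkm⟩ : ℕ); omega
    · show (q ⟨(k : ℕ), hkm⟩ : ℕ) < (q ⟨(j : ℕ), hjm⟩ : ℕ); omega
  · rintro ⟨i, j, k, hij, hjk, h1, h2⟩
    have hin : (i : ℕ) < n := by have := i.isLt; omega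
    have hjn : (j : ℕ) < n := by have := j.isLt; omega
    have hkn : (k : ℕ) < n := by have := k.isLt; omega
    have h1' : (q i : ℕ) < (q k : ℕ) := h1
    have h2' : (q k : ℕ) < (q j : ℕ) := h2
    refine ⟨⟨(i : ℕ), hin⟩, ⟨(j : ℕ), hjn⟩, ⟨(k : ℕ), hkn⟩, ?_, ?_, ?_, ?_⟩
    · show (i : ℕ) < (j : ℕ); exact hij
    · show (j : ℕ) < (k : ℕ); exact hjk
    · show (Phi n t ht htn q ⟨(i : ℕ), hin⟩ : ℕ) < (Phi n t ht htn q ⟨(k : ℕ), hkn⟩ : ℕ)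
      rw [Phi_apply, Phi_apply,
        phiF_val_lt n t ht htn q ⟨(i : ℕ), hin⟩ i.isLt,
        phiF_val_lt n t ht htn q ⟨(k : ℕ), hkn⟩ k.isLt]
      rw [show (⟨((⟨(i : ℕ), hin⟩ : Fin n) : ℕ), i.isLt⟩ : Fin (n - t + 1)) = i from Fin.ext rfl]
      rw [show (⟨((⟨(k : ℕ), hkn⟩ : Fin n) : ℕ), k.isLt⟩ : Fin (n - t + 1)) = k from Fin.ext rfl]
      omega
    · show (Phi n t ht htn q ⟨(k : ℕ), hkn⟩ : ℕ) < (Phi n t ht htn q ⟨(j : ℕ), hjn⟩ : ℕ)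
      rw [Phi_apply, Phi_apply,
        phiF_val_lt n t ht htn q ⟨(k : ℕ), hkn⟩ k.isLt,
        phiF_val_lt n t ht htn q ⟨(j : ℕ), hjn⟩ j.isLt]
      rw [show (⟨((⟨(k : ℕ), hkn⟩ : Fin n) : ℕ), k.isLt⟩ : Fin (n - t + 1)) = k from Fin.ext rfl]
      rw [show (⟨((⟨(j : ℕ), hjn⟩ : Fin n) : ℕ), j.isLt⟩ : Fin (n - t + 1)) = j from Fin.ext rfl]
      omega

end Stmt12Aux

namespace Stmt12Aux

lemma mem_descentSet_pf {n : ℕ} (p : Equiv.Perm (Fin n)) (i : ℕ) :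
    i ∈ DescentSet p ↔ (1 ≤ i ∧ i < n ∧ pf p i < pf p (i - 1)) := by
  constructor
  · intro h
    have hb := descentSet_bounds p i h
    refine ⟨hb.1, hb.2, ?_⟩
    rw [pf_eq p i hb.2, pf_eq p (i - 1) (by omega)]
    exact (mem_descentSet p i hb.1 hb.2).mp h
  · rintro ⟨h1, h2, h3⟩
    rw [pf_eq p i h2, pf_eq p (i - 1) (by omega)] at h3
    exact (mem_descentSet p i h1 h2).mpr h3

lemma pf_phi_lt (n t : ℕ) (ht : 1 < t) (htn : t ≤ n) (q : Equiv.Perm (Fin (n - t + 1)))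
    (i : ℕ) (h : i < n - t + 1) :
    pf (Phi n t ht htn q) i = pf q i + (t - 1) := by
  have hn : i < n := by omega
  rw [pf_eq _ i hn, pf_eq q i h, Phi_apply]
  exact phiF_val_lt n t ht htn q ⟨i, hn⟩ h

lemma pf_phi_ge (n t : ℕ) (ht : 1 < t) (htn : t ≤ n) (q : Equiv.Perm (Fin (n - t + 1)))
    (i : ℕ) (hn : i < n) (h : ¬ i < n - t + 1) :
    pf (Phi n t ht htn q) i = n - 1 - i := by
  rw [pf_eq _ i hn, Phi_apply]
  exact phiF_val_ge n t ht htn q ⟨i, hn⟩ h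

lemma descent_phi (n t : ℕ) (ht : 1 < t) (htn : t ≤ n) (q : Equiv.Perm (Fin (n - t + 1)))
    (i : ℕ) :
    i ∈ DescentSet (Phi n t ht htn q) ↔
      (i ∈ DescentSet q ∨ (n - t + 1 ≤ i ∧ i ≤ n - 1)) := by
  rw [mem_descentSet_pf, mem_descentSet_pf]
  constructor
  · rintro ⟨h1, h2, h3⟩
    by_cases hm : i < n - t + 1
    · left
      refine ⟨h1, hm, ?_⟩
      rw [pf_phi_lt n t ht htn q i hm,
        pf_phi_lt n t ht htn q (i - 1) (by omega)] at h3
      omega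
    · right
      exact ⟨by omega, by omega⟩
  · rintro (⟨h1, h2, h3⟩ | ⟨h1, h2⟩)
    · refine ⟨h1, by omega, ?_⟩
      rw [pf_phi_lt n t ht htn q i h2, pf_phi_lt n t ht htn q (i - 1) (by omega)]
      omega
    · refine ⟨by omega, by omega, ?_⟩
      rw [pf_phi_ge n t ht htn q i (by omega) (by omega)]
      by_cases h' : i - 1 < n - t + 1
      · rw [pf_phi_lt n t ht htn q (i - 1) h']
        omega
      · rw [pf_phi_ge n t ht htn q (i - 1) (by omega) h']
        omega

lemma Phi_injective (n t : ℕ) (ht : 1 < t) (htn : t ≤ n)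
    (q q' : Equiv.Perm (Fin (n - t + 1)))
    (hqq : Phi n t ht htn q = Phi n t ht htn q') : q = q' := by
  apply Equiv.ext
  intro i
  apply Fin.ext
  have h : pf (Phi n t ht htn q) (i : ℕ) = pf (Phi n t ht htn q') (i : ℕ) := by rw [hqq]
  rw [pf_phi_lt n t ht htn q (i : ℕ) i.isLt, pf_phi_lt n t ht htn q' (i : ℕ) i.isLt] at h
  have e1 : pf q (i : ℕ) = (q i : ℕ) := pf_eq q (i : ℕ) i.isLt
  have e2 : pf q' (i : ℕ) = (q' i : ℕ) := pf_eq q' (i : ℕ) i.isLt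
  omega

lemma exists_phi_eq (n t : ℕ) (ht : 1 < t) (htn : t ≤ n) (p : Equiv.Perm (Fin n))
    (htail : ∀ c, c ≤ t - 2 → pf p (n - 1 - c) = c) :
    ∃ q : Equiv.Perm (Fin (n - t + 1)), Phi n t ht htn q = p := by
  have hval : ∀ i, i < n - t + 1 → t - 1 ≤ pf p i := by
    intro i hi
    by_contra h
    push_neg at h
    have hc := htail (pf p i) (by omega)
    have hj := pf_inj p (n - 1 - pf p i) i (by omega) (by omega) hc
    omega
  have hfb : ∀ i : Fin (n - t + 1), pf p (i : ℕ) - (t - 1) < n - t + 1 := by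
    intro i
    have := pf_lt p (i : ℕ) (by have := i.isLt; omega)
    omega
  set f : Fin (n - t + 1) → Fin (n - t + 1) := fun i => ⟨pf p (i : ℕ) - (t - 1), hfb i⟩
    with hf
  have hinj : Function.Injective f := by
    intro a b hab
    have h1 := congrArg Fin.val hab
    simp only [hf] at h1
    have h2 := hval (a : ℕ) a.isLt
    have h3 := hval (b : ℕ) b.isLt
    have h4 : pf p (a : ℕ) = pf p (b : ℕ) := by omega
    have h5 := pf_inj p (a : ℕ) (b : ℕ) (by have := a.isLt; omega) (by have := b.isLt; omega) h4
    exact Fin.ext h5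
  refine ⟨Equiv.ofBijective f (Finite.injective_iff_bijective.mp hinj), ?_⟩
  apply Equiv.ext
  intro i
  apply Fin.ext
  by_cases h : (i : ℕ) < n - t + 1
  · rw [Phi_apply, phiF_val_lt n t ht htn _ i h]
    show (f ⟨(i : ℕ), h⟩ : ℕ) + (t - 1) = (p i : ℕ)
    have h2 := hval (i : ℕ) h
    have h3 : pf p (i : ℕ) = (p i : ℕ) := pf_eq p (i : ℕ) i.isLt
    simp only [hf]
    omega
  · rw [Phi_apply, phiF_val_ge n t ht htn _ i h]
    have hc := htail (n - 1 - (i : ℕ)) (by have := i.isLt; omega)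
    rw [show n - 1 - (n - 1 - (i : ℕ)) = (i : ℕ) by have := i.isLt; omega] at hc
    rw [pf_eq p (i : ℕ) i.isLt] at hc
    exact hc.symm

end Stmt12Aux

/-- Let `t > 1` and let `T ⊆ [n-1]` contain all of
`n-t+1, n-t+2, …, n-1` but not `n-t` (when `n-t ≥ 1`). Then every 132-avoiding permutation
`p` of `[n]` with descent set exactly `T` ends with `(p_{n-t+2}, …, p_n) = (t-1, …, 1)`
(in 1-based indexing and values; in our 0-based model, `(p ⟨j-1⟩ : ℕ) = n - j` for
`n-t+2 ≤ j ≤ n`), and consequently the number of 132-avoiding permutations of `[n]` with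
descent set exactly `T` equals the number of 132-avoiding permutations of `[n-(t-1)]` with
descent set exactly `T ∩ [n-t]`. -/
theorem stmt_12 (n t : ℕ) (hn : 0 < n) (ht : 1 < t) (htn : t ≤ n)
    (T : Finset ℕ) (hT : T ⊆ Finset.Icc 1 (n - 1))
    (hTin : ∀ i, n - t + 1 ≤ i → i ≤ n - 1 → i ∈ T)
    (hTout : 1 ≤ n - t → n - t ∉ T) :
    (∀ p : Equiv.Perm (Fin n), Avoids132 p → DescentSet p = T →
      ∀ j (hj1 : n - t + 2 ≤ j) (hj2 : j ≤ n), (p ⟨j - 1, by omega⟩ : ℕ) = n - j) ∧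
    Nat.card {p : Equiv.Perm (Fin n) // Avoids132 p ∧ DescentSet p = T} =
    Nat.card {p : Equiv.Perm (Fin (n - (t - 1))) // Avoids132 p ∧
      DescentSet p = T ∩ Finset.Icc 1 (n - t)} := by
  have htail : ∀ p : Equiv.Perm (Fin n), Avoids132 p → DescentSet p = T →
      ∀ c, c ≤ t - 2 → Stmt12Aux.pf p (n - 1 - c) = c := by
    intro p hav hdT
    apply Stmt12Aux.key n t ht htn (Stmt12Aux.pf p) (Stmt12Aux.pf_inj p) (Stmt12Aux.pf_surj p)
      (Stmt12Aux.pf_av p hav)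
    intro c hc
    have hmem : (n - 1 - c) ∈ T := hTin _ (by omega) (by omega)
    rw [← hdT] at hmem
    exact ((Stmt12Aux.mem_descentSet_pf p _).mp hmem).2.2
  constructor
  · intro p hav hdT j hj1 hj2
    have h := htail p hav hdT (n - j) (by omega)
    rw [show n - 1 - (n - j) = j - 1 by omega] at h
    rw [← Stmt12Aux.pf_eq p (j - 1) (by omega)]
    exact h
  · rw [show n - (t - 1) = n - t + 1 by omega]
    have key2 : ∀ q : Equiv.Perm (Fin (n - t + 1)),
        DescentSet (Stmt12Aux.Phi n t ht htn q) = T ↔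
        DescentSet q = T ∩ Finset.Icc 1 (n - t) := by
      intro q
      constructor
      · intro h
        ext i
        simp only [Finset.mem_inter, Finset.mem_Icc]
        constructor
        · intro hi
          have hb := Stmt12Aux.descentSet_bounds q i hi
          have h2 : i ∈ DescentSet (Stmt12Aux.Phi n t ht htn q) :=
            (Stmt12Aux.descent_phi n t ht htn q i).mpr (Or.inl hi)
          rw [h] at h2
          exact ⟨h2, hb.1, by omega⟩
        · rintro ⟨hiT, h1, h2⟩
          have h3 : i ∈ DescentSet (Stmt12Aux.Phi n t ht htn q) := by rw [h]; exact hiT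
          rcases (Stmt12Aux.descent_phi n t ht htn q i).mp h3 with h' | h'
          · exact h'
          · omega
      · intro h
        ext i
        rw [Stmt12Aux.descent_phi n t ht htn q i, h]
        simp only [Finset.mem_inter, Finset.mem_Icc]
        constructor
        · rintro (⟨hiT, -, -⟩ | ⟨h1', h2'⟩)
          · exact hiT
          · exact hTin i h1' h2'
        · intro hiT
          have hb := hT hiT
          simp only [Finset.mem_Icc] at hb
          by_cases hc : i ≤ n - t
          · exact Or.inl ⟨hiT, hb.1, hc⟩
          · exact Or.inr ⟨by omega, hb.2⟩
    refine (Nat.card_congr (Equiv.ofBijective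
      (fun q : {q : Equiv.Perm (Fin (n - t + 1)) // Avoids132 q ∧
          DescentSet q = T ∩ Finset.Icc 1 (n - t)} =>
        (⟨Stmt12Aux.Phi n t ht htn q.1,
          (Stmt12Aux.avoids_phi_iff n t ht htn q.1).mpr q.2.1,
          (key2 q.1).mpr q.2.2⟩ :
          {p : Equiv.Perm (Fin n) // Avoids132 p ∧ DescentSet p = T}))
      ⟨?_, ?_⟩)).symm
    · rintro ⟨q, hq⟩ ⟨q', hq'⟩ hqq
      simp only [Subtype.mk.injEq] at hqq ⊢
      exact Stmt12Aux.Phi_injective n t ht htn q q' hqq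
    · rintro ⟨p, hp1, hp2⟩
      obtain ⟨q, hq⟩ := Stmt12Aux.exists_phi_eq n t ht htn p (htail p hp1 hp2)
      refine ⟨⟨q, ?_, ?_⟩, ?_⟩
      · exact (Stmt12Aux.avoids_phi_iff n t ht htn q).mp (by rw [hq]; exact hp1)
      · exact (key2 q).mp (by rw [hq]; exact hp2)
      · exact Subtype.ext hq
end
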